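/- arXiv:1701.06379 — 8 statements merged into one kernel-verified Lean document; each statement's English description precedes it below -/
import Mathlib

section
/- Suppose the primal feasible set {α ∈ E : A_n α − b ∈ 𝕂 and ‖α‖_R ≤ θ_P} is nonempty. Then the regularized semi-infinite program and its dual have zero duality gap: J_n = J̃_n (Proposition 3.1, first part; the proof uses compactness of the finite-dimensional ball and Sion's minimax theorem). -/
open MeasureTheory
open Pointwise

set_option maxHeartbeats 1000000

/-- **Proposition 3.1 (first part): zero duality gap.**
If the primal feasible set of the regularized semi-infinite program is nonempty,
then `J_n = J̃_n`. -/
theorem stmt_0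
    {B : Type*} [NormedAddCommGroup B] [NormedSpace ℝ B]
    {E : Type*} [NormedAddCommGroup E] [NormedSpace ℝ E] [FiniteDimensional ℝ E]
    (𝕂 : Set B) (h𝕂_closed : IsClosed 𝕂) (h𝕂_convex : Convex ℝ 𝕂)
    (h𝕂_cone : ∀ z ∈ 𝕂, ∀ t : ℝ, 0 ≤ t → t • z ∈ 𝕂)
    (An : E →L[ℝ] B) (c : E →L[ℝ] ℝ) (b : B) (θP : ℝ) (hθP : 0 < θP)
    (hfeas : ∃ α : E, An α - b ∈ 𝕂 ∧ ‖α‖ ≤ θP) :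
    sInf {r : ℝ | ∃ α : E, An α - b ∈ 𝕂 ∧ ‖α‖ ≤ θP ∧ r = c α} =
      sSup {r : ℝ | ∃ y : B →L[ℝ] ℝ, (∀ b' ∈ 𝕂, 0 ≤ y b') ∧
        r = y b - θP * ‖y.comp An - c‖} := by
  classical
  obtain ⟨α₀, hα₀K, hα₀n⟩ := hfeas
  have h0K : (0 : B) ∈ 𝕂 := by simpa using h𝕂_cone _ hα₀K 0 le_rfl
  set P : Set ℝ := {r : ℝ | ∃ α : E, An α - b ∈ 𝕂 ∧ ‖α‖ ≤ θP ∧ r = c α} with hPdef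
  set Dl : Set ℝ := {r : ℝ | ∃ y : B →L[ℝ] ℝ, (∀ b' ∈ 𝕂, 0 ≤ y b') ∧
        r = y b - θP * ‖y.comp An - c‖} with hDdef
  have hPne : (c α₀) ∈ P := ⟨α₀, hα₀K, hα₀n, rfl⟩
  have hPbdd : BddBelow P := by
    refine ⟨-(‖c‖ * θP), ?_⟩
    rintro r ⟨α, _, hn, rfl⟩
    have h1 : ‖c α‖ ≤ ‖c‖ * ‖α‖ := c.le_opNorm α
    have h2 : ‖c‖ * ‖α‖ ≤ ‖c‖ * θP := mul_le_mul_of_nonneg_left hn (norm_nonneg c)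
    have h3 := abs_le.mp (le_trans (le_trans (le_of_eq (Real.norm_eq_abs _).symm) h1) h2)
    linarith [h3.1]
  -- weak duality
  have hweak : ∀ r ∈ Dl, ∀ α : E, An α - b ∈ 𝕂 → ‖α‖ ≤ θP → r ≤ c α := by
    rintro r ⟨y, hy, rfl⟩ α hK hn
    have h1 : 0 ≤ y (An α - b) := hy _ hK
    have h5 : (y.comp An - c) α = y (An α) - c α := by
      simp [ContinuousLinearMap.sub_apply]
    have h2 : (y.comp An - c) α ≤ ‖y.comp An - c‖ * θP := by
      have ha := (y.comp An - c).le_opNorm α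
      have hb : ‖y.comp An - c‖ * ‖α‖ ≤ ‖y.comp An - c‖ * θP :=
        mul_le_mul_of_nonneg_left hn (norm_nonneg _)
      have hc := le_abs_self ((y.comp An - c) α)
      rw [Real.norm_eq_abs] at ha
      linarith
    have h4 : y (An α) - y b = y (An α - b) := by rw [map_sub]
    linarith
  have hDne : ((0 : B →L[ℝ] ℝ) b - θP * ‖(0 : B →L[ℝ] ℝ).comp An - c‖) ∈ Dl :=
    ⟨0, fun b' _ => le_rfl, rfl⟩
  have hDbdd : BddAbove Dl := ⟨c α₀, fun r hr => hweak r hr α₀ hα₀K hα₀n⟩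
  have hge : sSup Dl ≤ sInf P := by
    refine le_csInf ⟨_, hPne⟩ ?_
    rintro s ⟨α, hK, hn, rfl⟩
    exact csSup_le ⟨_, hDne⟩ fun r hr => hweak r hr α hK hn
  refine le_antisymm ?_ hge
  set J := sInf P with hJ
  apply le_of_forall_sub_le
  intro ε hε
  -- the separation argument
  set S : Set (B × ℝ) := (fun α : E => (An α - b, c α)) '' Metric.closedBall 0 θP with hSdef
  have hScpt : IsCompact S :=
    (isCompact_closedBall 0 θP).image
      ((An.continuous.sub continuous_const).prodMk c.continuous)
  have hSconv : Convex ℝ S := by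
    rintro _ ⟨x, hx, rfl⟩ _ ⟨z, hz, rfl⟩ a a' ha ha' haa
    refine ⟨a • x + a' • z, convex_closedBall 0 θP hx hz ha ha' haa, ?_⟩
    have h1 : An (a • x + a' • z) - b = a • (An x - b) + a' • (An z - b) := by
      rw [map_add, _root_.map_smul, _root_.map_smul]
      match_scalars <;> linarith
    have h2 : c (a • x + a' • z) = a • (c x) + a' • (c z) := by
      rw [map_add, _root_.map_smul, _root_.map_smul]
    simp only [Prod.smul_mk, Prod.mk_add_mk, Prod.mk.injEq]
    exact ⟨h1, h2⟩
  set C : Set (B × ℝ) := (-𝕂) ×ˢ (Set.Ici (0 : ℝ)) with hCdef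
  have hCclosed : IsClosed C := (h𝕂_closed.neg).prod isClosed_Ici
  have hCconv : Convex ℝ C := (h𝕂_convex.neg).prod (convex_Ici 0)
  set Dset : Set (B × ℝ) := S + C with hDsetdef
  have hDclosed : IsClosed Dset := hCclosed.add_left_of_isCompact hScpt
  have hDconv : Convex ℝ Dset := hSconv.add hCconv
  have hmemD : ∀ α : E, ‖α‖ ≤ θP → ∀ k ∈ 𝕂, ∀ t : ℝ, 0 ≤ t →
      ((An α - b - k, c α + t) : B × ℝ) ∈ Dset := by
    intro α hα k hk t ht
    have h1 : ((An α - b, c α) : B × ℝ) ∈ S :=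
      ⟨α, by simpa [Metric.mem_closedBall, dist_zero_right] using hα, rfl⟩
    have h2 : ((-k, t) : B × ℝ) ∈ C := ⟨by simpa using hk, ht⟩
    have h3 := Set.add_mem_add h1 h2
    simpa [Prod.mk_add_mk, sub_eq_add_neg] using h3
  have hpD : (((0 : B), J - ε)) ∉ Dset := by
    rw [hDsetdef, Set.mem_add]
    rintro ⟨⟨z1, r1⟩, ⟨α, hαb, heq⟩, ⟨w1, t1⟩, ⟨hw, ht⟩, hsum⟩
    rw [Prod.mk.injEq] at heq
    rw [Prod.mk_add_mk, Prod.mk.injEq] at hsum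
    have hz1 : z1 ∈ 𝕂 := by
      have h1 : z1 = -w1 := eq_neg_of_add_eq_zero_left hsum.1
      rw [h1]
      exact Set.mem_neg.mp hw
    have hcα : c α ∈ P := ⟨α, heq.1 ▸ hz1,
      by simpa [Metric.mem_closedBall, dist_zero_right] using hαb, rfl⟩
    have hJle : J ≤ c α := csInf_le hPbdd hcα
    have ht' : (0 : ℝ) ≤ t1 := ht
    have hr1 : r1 = c α := heq.2.symm
    have h2 : r1 + t1 = J - ε := hsum.2
    linarith
  obtain ⟨f, u, hfu, hfD⟩ := geometric_hahn_banach_point_closed hDconv hDclosed hpD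
  set φ : B →L[ℝ] ℝ := f.comp (ContinuousLinearMap.inl ℝ B ℝ) with hφdef
  set β : ℝ := f (0, 1) with hβdef
  have hf_eq : ∀ (z : B) (r : ℝ), f (z, r) = φ z + r * β := by
    intro z r
    have h : ((z, r) : B × ℝ) = (z, 0) + r • ((0 : B), (1 : ℝ)) := by
      simp [Prod.ext_iff]
    rw [h, map_add, _root_.map_smul, smul_eq_mul]
    simp [hφdef, hβdef, mul_comm]
  have hβnn : 0 ≤ β := by
    by_contra h
    push_neg at h
    set t : ℝ := max 0 ((u - φ (An α₀ - b) - c α₀ * β) / β) with htdef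
    have ht0 : 0 ≤ t := le_max_left _ _
    have h1 := hfD _ (hmemD α₀ hα₀n 0 h0K t ht0)
    rw [sub_zero, hf_eq] at h1
    have h2 : (u - φ (An α₀ - b) - c α₀ * β) / β ≤ t := le_max_right _ _
    have h3 : t * β ≤ ((u - φ (An α₀ - b) - c α₀ * β) / β) * β :=
      mul_le_mul_of_nonpos_right h2 h.le
    have h4 : ((u - φ (An α₀ - b) - c α₀ * β) / β) * β
        = u - φ (An α₀ - b) - c α₀ * β := div_mul_cancel₀ _ h.ne
    nlinarith
  have hφ𝕂 : ∀ k ∈ 𝕂, φ k ≤ 0 := by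
    intro k hk
    by_contra h
    push_neg at h
    set s : ℝ := max 0 ((φ (An α₀ - b) + c α₀ * β - u) / (φ k) + 1) with hsdef
    have hs0 : 0 ≤ s := le_max_left _ _
    have h1 := hfD _ (hmemD α₀ hα₀n (s • k) (h𝕂_cone k hk s hs0) 0 le_rfl)
    rw [add_zero, hf_eq] at h1
    have h2 : φ (An α₀ - b - s • k) = φ (An α₀ - b) - s * φ k := by
      rw [map_sub, _root_.map_smul, smul_eq_mul]
    rw [h2] at h1
    have h3 : (φ (An α₀ - b) + c α₀ * β - u) / (φ k) + 1 ≤ s := le_max_right _ _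
    have h4 : ((φ (An α₀ - b) + c α₀ * β - u) / (φ k) + 1) * φ k ≤ s * φ k :=
      mul_le_mul_of_nonneg_right h3 h.le
    have h5 : ((φ (An α₀ - b) + c α₀ * β - u) / (φ k) + 1) * φ k
        = (φ (An α₀ - b) + c α₀ * β - u) + φ k := by
      rw [add_mul, one_mul, div_mul_cancel₀ _ h.ne']
    nlinarith
  have hβpos : 0 < β := by
    rcases hβnn.lt_or_eq with h | h
    · exact h
    · exfalso
      have h1 : f ((0 : B), J - ε) = 0 := by
        rw [hf_eq, map_zero, ← h, mul_zero, add_zero]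
      have h2 := hfD _ (hmemD α₀ hα₀n (An α₀ - b) hα₀K 0 le_rfl)
      rw [sub_self, hf_eq, map_zero, ← h] at h2
      simp at h2
      rw [h1] at hfu
      linarith
  set y : B →L[ℝ] ℝ := (-β⁻¹) • φ with hydef
  have hyval : ∀ z : B, y z = -β⁻¹ * φ z := fun z => rfl
  have hy𝕂 : ∀ b' ∈ 𝕂, 0 ≤ y b' := by
    intro b' hb'
    have h1 := hφ𝕂 b' hb'
    rw [hyval]
    have h2 : 0 < β⁻¹ := inv_pos.mpr hβpos
    nlinarith
  have hkey : ∀ α : E, ‖α‖ ≤ θP → J - ε < c α - y (An α - b) := by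
    intro α hα
    have h1 := hfD _ (hmemD α hα 0 h0K 0 le_rfl)
    rw [sub_zero, add_zero, hf_eq] at h1
    have h2 : f ((0 : B), J - ε) = (J - ε) * β := by
      rw [hf_eq, map_zero, zero_add]
    rw [h2] at hfu
    have h3 : (J - ε) * β < φ (An α - b) + c α * β := by linarith
    have h4 := mul_lt_mul_of_pos_left h3 (inv_pos.mpr hβpos)
    rw [mul_add] at h4
    have e1 : β⁻¹ * ((J - ε) * β) = J - ε := by field_simp
    have e2 : β⁻¹ * (c α * β) = c α := by field_simp
    rw [hyval]
    nlinarith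
  have hMneg : J - ε - y b < 0 := by
    have h1 := hkey 0 (by simpa using hθP.le)
    simp at h1
    linarith
  set g : E →L[ℝ] ℝ := c - y.comp An with hgdef
  have hgkey : ∀ α : E, ‖α‖ ≤ θP → J - ε - y b < g α := by
    intro α hα
    have h1 := hkey α hα
    have h2 : g α = c α - y (An α) := by
      simp [hgdef, ContinuousLinearMap.sub_apply]
    rw [map_sub] at h1
    linarith
  have hgnorm : ‖g‖ ≤ (y b - (J - ε)) / θP := by
    apply ContinuousLinearMap.opNorm_le_bound _ (div_nonneg (by linarith) hθP.le)
    intro x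
    rcases eq_or_ne x 0 with rfl | hx
    · simp
    · have hxpos : 0 < ‖x‖ := norm_pos_iff.mpr hx
      set α : E := (θP / ‖x‖) • x with hαdef
      have hαn : ‖α‖ = θP := by
        rw [hαdef, norm_smul, Real.norm_eq_abs, abs_of_pos (div_pos hθP hxpos),
          div_mul_cancel₀ _ hxpos.ne']
      have h1 := hgkey α hαn.le
      have h2 := hgkey (-α) (by rw [norm_neg, hαn])
      rw [map_neg] at h2
      have h3 : |g α| ≤ y b - (J - ε) := abs_le.mpr ⟨by linarith, by linarith⟩
      have h4 : g α = (θP / ‖x‖) * g x := by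
        rw [hαdef, _root_.map_smul, smul_eq_mul]
      rw [h4, abs_mul, abs_of_pos (div_pos hθP hxpos)] at h3
      rw [Real.norm_eq_abs, div_mul_eq_mul_div, le_div_iff₀ hθP]
      rw [div_mul_eq_mul_div, div_le_iff₀ hxpos] at h3
      nlinarith [abs_nonneg (g x)]
  have hyel : (y b - θP * ‖y.comp An - c‖) ∈ Dl := ⟨y, hy𝕂, rfl⟩
  have h6 : ‖y.comp An - c‖ = ‖g‖ := by
    have h : y.comp An - c = -g := by rw [hgdef, neg_sub]
    rw [h, norm_neg]
  have h7 : J - ε ≤ y b - θP * ‖y.comp An - c‖ := by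
    rw [h6]
    have h8 : θP * ‖g‖ ≤ θP * ((y b - (J - ε)) / θP) :=
      mul_le_mul_of_nonneg_left hgnorm hθP.le
    have h9 : θP * ((y b - (J - ε)) / θP) = y b - (J - ε) := by field_simp
    linarith
  have h10 := le_csSup hDbdd hyel
  linarith
end

section
/- Under the semi-infinite regularity assumption, if y* ∈ 𝕂* attains the dual value, i.e. y*(b) − θ_P‖A_n* y* − c‖_{R*} = J̃_n, then for every real number J_LB with J_LB ≤ J_n one has ‖y*‖_* ≤ (θ_P‖c‖_{R*} − J_LB)/(γθ_P − ‖b‖); in particular ‖y*‖_* ≤ 2θ_P‖c‖_{R*}/(γθ_P − ‖b‖) (Proposition 3.1, second part). -/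
open MeasureTheory

open Pointwise

/-- If a continuous linear functional is bounded by `M` on the ball of radius `θ`,
then `θ * ‖T‖ ≤ M`. -/
lemma aux_ball_bound {E : Type*} [NormedAddCommGroup E] [NormedSpace ℝ E]
    (T : E →L[ℝ] ℝ) (θ M : ℝ) (hθ : 0 < θ)
    (h : ∀ α : E, ‖α‖ ≤ θ → T α < M) : θ * ‖T‖ ≤ M := by
  have hM : 0 < M := by
    have := h 0 (by simp [hθ.le])
    simpa using this
  have hTb : ‖T‖ ≤ M / θ := by
    refine T.opNorm_le_bound (by positivity) ?_
    intro x
    rcases eq_or_ne x 0 with rfl | hx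
    · simp [hM.le, hθ.le, div_nonneg]
    · have hxn : 0 < ‖x‖ := norm_pos_iff.2 hx
      set α : E := (θ / ‖x‖) • x with hα
      have hαn : ‖α‖ = θ := by
        rw [hα, norm_smul, Real.norm_eq_abs, abs_of_pos (by positivity)]
        field_simp
      have h1 : T α < M := h α (le_of_eq hαn)
      have h2 : T (-α) < M := h (-α) (by rw [norm_neg, hαn])
      have h2' : -(T α) < M := by rwa [map_neg] at h2
      have habs : |T α| ≤ M := abs_le.2 ⟨by linarith, h1.le⟩
      have hTα : T α = (θ / ‖x‖) * T x := by rw [hα, _root_.map_smul, smul_eq_mul]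
      rw [hTα, abs_mul, abs_of_pos (by positivity)] at habs
      rw [Real.norm_eq_abs]
      rw [div_mul_eq_mul_div, le_div_iff₀ hθ]
      calc |T x| * θ = θ / ‖x‖ * |T x| * ‖x‖ := by field_simp
        _ ≤ M * ‖x‖ := by
            exact mul_le_mul_of_nonneg_right habs hxn.le
  calc θ * ‖T‖ ≤ θ * (M / θ) := mul_le_mul_of_nonneg_left hTb hθ.le
    _ = M := by field_simp

set_option maxHeartbeats 1000000 in
/-- **Proposition 3.1 (second part): bound on dual optimizers.**
Under the semi-infinite regularity assumption, any dual optimizer `y*` satisfies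
`‖y*‖_* ≤ (θ_P‖c‖_{R*} − J_LB)/(γθ_P − ‖b‖)` for every lower bound `J_LB ≤ J_n`,
and in particular `‖y*‖_* ≤ 2θ_P‖c‖_{R*}/(γθ_P − ‖b‖)`. -/
theorem stmt_1
    {B : Type*} [NormedAddCommGroup B] [NormedSpace ℝ B]
    {E : Type*} [NormedAddCommGroup E] [NormedSpace ℝ E] [FiniteDimensional ℝ E]
    (𝕂 : Set B) (h𝕂_closed : IsClosed 𝕂) (h𝕂_convex : Convex ℝ 𝕂)
    (h𝕂_cone : ∀ z ∈ 𝕂, ∀ t : ℝ, 0 ≤ t → t • z ∈ 𝕂)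
    (An : E →L[ℝ] B) (c : E →L[ℝ] ℝ) (b : B) (θP : ℝ) (hθP : 0 < θP)
    -- regularity (i): primal feasibility
    (hfeas : ∃ α : E, An α - b ∈ 𝕂 ∧ ‖α‖ ≤ θP)
    -- regularity (ii): inf-sup condition
    (γ : ℝ) (hγ : 0 < γ)
    (hinfsup : ∀ y : B →L[ℝ] ℝ, (∀ b' ∈ 𝕂, 0 ≤ y b') → γ * ‖y‖ ≤ ‖y.comp An‖)
    (hbθ : ‖b‖ < γ * θP)
    -- a dual optimizer
    (ystar : B →L[ℝ] ℝ) (hystar_mem : ∀ b' ∈ 𝕂, 0 ≤ ystar b')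
    (hystar_attain : ystar b - θP * ‖ystar.comp An - c‖ =
      sSup {r : ℝ | ∃ y : B →L[ℝ] ℝ, (∀ b' ∈ 𝕂, 0 ≤ y b') ∧
        r = y b - θP * ‖y.comp An - c‖}) :
    (∀ JLB : ℝ,
        JLB ≤ sInf {r : ℝ | ∃ α : E, An α - b ∈ 𝕂 ∧ ‖α‖ ≤ θP ∧ r = c α} →
        ‖ystar‖ ≤ (θP * ‖c‖ - JLB) / (γ * θP - ‖b‖)) ∧
      ‖ystar‖ ≤ 2 * θP * ‖c‖ / (γ * θP - ‖b‖) := by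
  obtain ⟨α₀, hα₀K, hα₀n⟩ := hfeas
  set P : Set ℝ := {r : ℝ | ∃ α : E, An α - b ∈ 𝕂 ∧ ‖α‖ ≤ θP ∧ r = c α} with hPdef
  set S : Set ℝ := {r : ℝ | ∃ y : B →L[ℝ] ℝ, (∀ b' ∈ 𝕂, 0 ≤ y b') ∧
        r = y b - θP * ‖y.comp An - c‖} with hSdef
  have h0K : (0 : B) ∈ 𝕂 := by
    have := h𝕂_cone _ hα₀K 0 le_rfl
    simpa using this
  -- P is nonempty and bounded below
  have hPne : P.Nonempty := ⟨c α₀, α₀, hα₀K, hα₀n, rfl⟩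
  have hPlb : ∀ r ∈ P, -(θP * ‖c‖) ≤ r := by
    rintro r ⟨α, -, hαn, rfl⟩
    have h1 : ‖c α‖ ≤ ‖c‖ * ‖α‖ := c.le_opNorm α
    have h2 : ‖c‖ * ‖α‖ ≤ ‖c‖ * θP := mul_le_mul_of_nonneg_left hαn (norm_nonneg c)
    have h3 : |c α| ≤ ‖c‖ * θP := by rw [← Real.norm_eq_abs]; linarith
    have := abs_le.1 h3
    nlinarith [this.1]
  have hPbdd : BddBelow P := ⟨-(θP * ‖c‖), hPlb⟩
  -- S is bounded above (weak duality) and nonempty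
  have hSub : ∀ r ∈ S, r ≤ c α₀ := by
    rintro r ⟨y, hyK, rfl⟩
    have h1 : 0 ≤ y (An α₀ - b) := hyK _ hα₀K
    have h2 : y b ≤ y (An α₀) := by
      rw [map_sub] at h1; linarith
    have h3 : (y.comp An - c) α₀ ≤ ‖y.comp An - c‖ * θP := by
      calc (y.comp An - c) α₀ ≤ |(y.comp An - c) α₀| := le_abs_self _
        _ = ‖(y.comp An - c) α₀‖ := (Real.norm_eq_abs _).symm
        _ ≤ ‖y.comp An - c‖ * ‖α₀‖ := (y.comp An - c).le_opNorm α₀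
        _ ≤ ‖y.comp An - c‖ * θP := by
            exact mul_le_mul_of_nonneg_left hα₀n (norm_nonneg _)
    have h4 : (y.comp An - c) α₀ = y (An α₀) - c α₀ := by
      simp [ContinuousLinearMap.sub_apply]
    nlinarith
  have hSbdd : BddAbove S := ⟨c α₀, hSub⟩
  have hSne : S.Nonempty :=
    ⟨ystar b - θP * ‖ystar.comp An - c‖, ystar, hystar_mem, rfl⟩
  -- Strong duality: sInf P ≤ sSup S
  have hJD : sInf P ≤ sSup S := by
    refine le_of_forall_sub_le ?_
    intro ε hε
    set J : ℝ := sInf P with hJdef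
    -- the separating sets
    set L : E →L[ℝ] B × ℝ := An.prod c with hLdef
    set S2 : Set (B × ℝ) := {q : B × ℝ | -b - q.1 ∈ 𝕂} ∩ {q : B × ℝ | 0 ≤ q.2}
      with hS2def
    set C : Set (B × ℝ) := (⇑L '' Metric.closedBall 0 θP) + S2 with hCdef
    have hS2closed : IsClosed S2 :=
      (h𝕂_closed.preimage (continuous_const.sub continuous_fst)).inter
        (isClosed_Ici.preimage continuous_snd)
    have hS2convex : Convex ℝ S2 := by
      rintro q ⟨hq1, hq2⟩ r ⟨hr1, hr2⟩ a a' ha ha' haa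
      constructor
      · have hmem := h𝕂_convex hq1 hr1 ha ha' haa
        have heq : a • (-b - q.1) + a' • (-b - r.1) = -b - (a • q + a' • r).1 := by
          have h1 : (a • q + a' • r).1 = a • q.1 + a' • r.1 := rfl
          rw [h1, smul_sub, smul_sub]
          have h2 : a • (-b) + a' • (-b) = -b := by
            rw [← add_smul, haa, one_smul]
          calc a • (-b) - a • q.1 + (a' • (-b) - a' • r.1)
              = (a • (-b) + a' • (-b)) - (a • q.1 + a' • r.1) := by abel
            _ = -b - (a • q.1 + a' • r.1) := by rw [h2]
        show -b - (a • q + a' • r).1 ∈ 𝕂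
        rw [← heq]
        exact hmem
      · have h1 : (a • q + a' • r).2 = a * q.2 + a' * r.2 := rfl
        show 0 ≤ (a • q + a' • r).2
        rw [h1]
        have := mul_nonneg ha hq2
        have := mul_nonneg ha' hr2
        linarith
    have hCclosed : IsClosed C :=
      hS2closed.add_left_of_isCompact
        ((isCompact_closedBall (0 : E) θP).image L.continuous)
    have hCconvex : Convex ℝ C :=
      ((convex_closedBall (0 : E) θP).is_linear_image
        ⟨fun x y => map_add L x y, fun a x => map_smul L a x⟩).add hS2convex
    -- membership lemma for C
    have hCmem : ∀ α : E, ‖α‖ ≤ θP → ∀ k ∈ 𝕂, ∀ t : ℝ, 0 ≤ t →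
        ((An α - b - k, c α + t) : B × ℝ) ∈ C := by
      intro α hα k hk t ht
      rw [hCdef, Set.mem_add]
      refine ⟨(An α, c α), ⟨α, Metric.mem_closedBall.2 (by simpa using hα), rfl⟩,
        (-b - k, t), ⟨?_, ht⟩, ?_⟩
      · show -b - (-b - k) ∈ 𝕂
        simpa using hk
      · ext
        · show An α + (-b - k) = An α - b - k
          abel
        · show c α + t = c α + t
          rfl
    -- the point to separate
    have hx₀ : ((0 : B), J - ε) ∉ C := by
      intro hmem
      rw [hCdef, Set.mem_add] at hmem
      obtain ⟨p, ⟨α, hαball, rfl⟩, q, ⟨hq1, hq2⟩, hsum⟩ := hmem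
      have hLα : L α = (An α, c α) := rfl
      rw [hLα] at hsum
      have h1 : An α + q.1 = 0 := congrArg Prod.fst hsum
      have h2 : c α + q.2 = J - ε := congrArg Prod.snd hsum
      have hq1' : An α - b ∈ 𝕂 := by
        have : An α - b = -b - q.1 := by
          have hq : q.1 = -An α := eq_neg_of_add_eq_zero_right h1
          rw [hq]; abel
        rw [this]; exact hq1
      have hcαP : c α ∈ P := ⟨α, hq1', by simpa using Metric.mem_closedBall.1 hαball, rfl⟩
      have hJle : J ≤ c α := csInf_le hPbdd hcαP
      have hq2' : (0:ℝ) ≤ q.2 := hq2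
      linarith
    -- separate
    obtain ⟨f, u, hfx, hfC⟩ :=
      geometric_hahn_banach_point_closed hCconvex hCclosed hx₀
    set φ : B →L[ℝ] ℝ := f.comp (ContinuousLinearMap.inl ℝ B ℝ) with hφdef
    set lam : ℝ := f ((0 : B), (1 : ℝ)) with hlamdef
    have hsplit : ∀ (z : B) (s : ℝ), f (z, s) = φ z + s * lam := by
      intro z s
      have h1 : ((z, s) : B × ℝ) = (z, (0 : ℝ)) + s • ((0 : B), (1 : ℝ)) := by
        ext
        · show z = z + s • (0 : B); simp
        · show s = 0 + s * 1; ring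
      rw [h1, map_add, _root_.map_smul, smul_eq_mul]
      rfl
    have hineq : ∀ α : E, ‖α‖ ≤ θP → ∀ k ∈ 𝕂, ∀ t : ℝ, 0 ≤ t →
        u < φ (An α - b - k) + (c α + t) * lam := by
      intro α hα k hk t ht
      have := hfC _ (hCmem α hα k hk t ht)
      rwa [hsplit] at this
    have hu0 : (J - ε) * lam < u := by
      have := hfx
      rw [hsplit] at this
      simpa using this
    have hAn0 : An (0 : E) = 0 := map_zero An
    have hc0 : c (0 : E) = 0 := map_zero c
    have hbase : u < φ (-b) := by
      have h5 := hineq 0 (by simp [hθP.le]) 0 h0K 0 le_rfl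
      rw [hAn0, hc0] at h5
      have he2 : (0 : B) - b - 0 = -b := by abel
      rw [he2] at h5
      linarith [h5]
    -- lam ≥ 0
    have hlam0 : 0 ≤ lam := by
      by_contra hneg
      push_neg at hneg
      have ht0 : (0:ℝ) ≤ (u - φ (-b)) / lam :=
        div_nonneg_of_nonpos (by linarith) hneg.le
      have h5 := hineq 0 (by simp [hθP.le]) 0 h0K _ ht0
      rw [hAn0, hc0] at h5
      have he2 : (0 : B) - b - 0 = -b := by abel
      rw [he2, zero_add, div_mul_cancel₀ _ (ne_of_lt hneg)] at h5
      linarith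
    -- -φ is in the dual cone
    have hφK : ∀ k ∈ 𝕂, φ k ≤ 0 := by
      intro k hk
      by_contra hpos
      push_neg at hpos
      have hs0 : (0:ℝ) ≤ (φ (-b) - u) / φ k := div_nonneg (by linarith) hpos.le
      have hks := h𝕂_cone k hk _ hs0
      have h5 := hineq 0 (by simp [hθP.le]) _ hks 0 le_rfl
      rw [hAn0, hc0] at h5
      have he2 : (0 : B) - b - ((φ (-b) - u) / φ k) • k
          = -b - ((φ (-b) - u) / φ k) • k := by abel
      rw [he2, map_sub, _root_.map_smul, smul_eq_mul,
        div_mul_cancel₀ _ (ne_of_gt hpos)] at h5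
      linarith
    rcases eq_or_lt_of_le hlam0 with hlamz | hlampos
    · -- lam = 0: contradiction with the inf-sup condition
      exfalso
      have hupos : 0 < u := by
        have := hu0
        rw [← hlamz] at this
        simpa using this
      set y₀ : B →L[ℝ] ℝ := -φ with hy₀def
      have hy₀K : ∀ b' ∈ 𝕂, 0 ≤ y₀ b' := by
        intro b' hb'
        have := hφK b' hb'
        simp only [hy₀def, ContinuousLinearMap.neg_apply]
        linarith
      have hball : ∀ α : E, ‖α‖ ≤ θP → (y₀.comp An) α < y₀ b - u := by
        intro α hα
        have := hineq α hα 0 h0K 0 le_rfl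
        rw [← hlamz] at this
        simp only [sub_zero, add_zero, mul_zero, map_sub] at this
        simp only [hy₀def, ContinuousLinearMap.comp_apply, ContinuousLinearMap.neg_apply]
        linarith
      have hnb := aux_ball_bound (y₀.comp An) θP (y₀ b - u) hθP hball
      have h1 : γ * ‖y₀‖ ≤ ‖y₀.comp An‖ := hinfsup y₀ hy₀K
      have h2 : y₀ b ≤ ‖y₀‖ * ‖b‖ := by
        calc y₀ b ≤ |y₀ b| := le_abs_self _
          _ = ‖y₀ b‖ := (Real.norm_eq_abs _).symm
          _ ≤ ‖y₀‖ * ‖b‖ := y₀.le_opNorm b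
      have r4 : (0:ℝ) ≤ ‖y₀‖ := norm_nonneg y₀
      have m1 := mul_le_mul_of_nonneg_left h1 hθP.le
      have m2 := mul_le_mul_of_nonneg_left hbθ.le r4
      linarith [m1, m2, hnb, h2, hupos]
    · -- lam > 0: build a dual feasible point with value ≥ J - ε
      set y : B →L[ℝ] ℝ := -(lam⁻¹ • φ) with hydef
      have hyapp : ∀ z : B, y z = -(lam⁻¹ * φ z) := by
        intro z
        rw [hydef]
        simp only [ContinuousLinearMap.neg_apply, ContinuousLinearMap.smul_apply,
          smul_eq_mul]
      have hyK : ∀ b' ∈ 𝕂, 0 ≤ y b' := by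
        intro b' hb'
        rw [hyapp]
        have h1 := hφK b' hb'
        have h2 : 0 < lam⁻¹ := inv_pos.2 hlampos
        have := mul_nonpos_of_nonneg_of_nonpos h2.le h1
        linarith
      have hball : ∀ α : E, ‖α‖ ≤ θP → (y.comp An - c) α < y b - (J - ε) := by
        intro α hα
        have h1 := hineq α hα 0 h0K 0 le_rfl
        simp only [sub_zero, add_zero, map_sub] at h1
        -- h1 : u < φ (An α) - φ b + c α * lam
        have h2 : (J - ε) * lam < φ (An α) - φ b + c α * lam := lt_trans hu0 h1
        have h3 : 0 < lam⁻¹ := inv_pos.2 hlampos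
        have h4 := mul_lt_mul_of_pos_left h2 h3
        have hln : lam ≠ 0 := ne_of_gt hlampos
        have e1 : lam⁻¹ * ((J - ε) * lam) = J - ε := by
          field_simp
        have e2 : lam⁻¹ * (φ (An α) - φ b + c α * lam)
            = lam⁻¹ * φ (An α) - lam⁻¹ * φ b + c α := by
          rw [mul_add, mul_sub, mul_comm (c α) lam, ← mul_assoc,
            inv_mul_cancel₀ hln, one_mul]
        rw [e1, e2] at h4
        simp only [ContinuousLinearMap.sub_apply, ContinuousLinearMap.comp_apply]
        rw [hyapp, hyapp]
        linarith
      have hnb := aux_ball_bound (y.comp An - c) θP (y b - (J - ε)) hθP hball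
      have hmem : y b - θP * ‖y.comp An - c‖ ∈ S := ⟨y, hyK, rfl⟩
      have := le_csSup hSbdd hmem
      linarith
  -- conclude
  rw [← hystar_attain] at hJD
  have hpos : 0 < γ * θP - ‖b‖ := by linarith
  have hmain : ∀ JLB : ℝ, JLB ≤ sInf P →
      ‖ystar‖ ≤ (θP * ‖c‖ - JLB) / (γ * θP - ‖b‖) := by
    intro JLB hJLB
    have hD : JLB ≤ ystar b - θP * ‖ystar.comp An - c‖ := le_trans hJLB hJD
    have h1 : γ * ‖ystar‖ ≤ ‖ystar.comp An‖ := hinfsup ystar hystar_mem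
    have h2 : ‖ystar.comp An‖ - ‖c‖ ≤ ‖ystar.comp An - c‖ := norm_sub_norm_le _ _
    have h3 : ystar b ≤ ‖ystar‖ * ‖b‖ := by
      calc ystar b ≤ |ystar b| := le_abs_self _
        _ = ‖ystar b‖ := (Real.norm_eq_abs _).symm
        _ ≤ ‖ystar‖ * ‖b‖ := ystar.le_opNorm b
    have h4 : θP * (γ * ‖ystar‖ - ‖c‖) ≤ θP * ‖ystar.comp An - c‖ :=
      mul_le_mul_of_nonneg_left (by linarith) hθP.le
    rw [le_div_iff₀ hpos]
    nlinarith
  refine ⟨hmain, ?_⟩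
  have hJLB : -(θP * ‖c‖) ≤ sInf P := le_csInf hPne hPlb
  have := hmain _ hJLB
  have heq : (θP * ‖c‖ - -(θP * ‖c‖)) / (γ * θP - ‖b‖)
      = 2 * θP * ‖c‖ / (γ * θP - ‖b‖) := by ring_nf
  linarith [heq ▸ this]
end

section
/- For every Lipschitz function u : S → ℝ with ‖u‖_L ≤ 1, the function on K given by (s,a) ↦ u(s) − ∫_S u dQ(s,a) has Lipschitz norm at most 1 + max{L_Q, 1}; that is, its sup-norm and its least Lipschitz constant (with respect to the ℓ∞ metric on K) are both bounded by 1 + max{L_Q, 1} (Lemma 3.5, MDP operator norm ‖I − Q‖ ≤ 1 + max{L_Q,1}). -/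
open MeasureTheory ProbabilityTheory

/-- **Lemma 3.5 (MDP operator norm `‖I − Q‖ ≤ 1 + max{L_Q,1}`).**
For every Lipschitz `u : S → ℝ` with `‖u‖_L ≤ 1`, the function
`(s,a) ↦ u(s) − ∫ u dQ(s,a)` on `K = S × A` has sup-norm and Lipschitz constant
both bounded by `1 + max{L_Q, 1}`. -/
theorem stmt_5
    (dS dA : ℕ)
    (Q : Kernel ((Fin dS → unitInterval) × (Fin dA → unitInterval)) (Fin dS → unitInterval))
    [IsMarkovKernel Q]
    (LQ : ℝ) (hLQ : 0 < LQ)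
    (hQ : ∀ (u : BoundedContinuousFunction (Fin dS → unitInterval) ℝ)
        (k k' : (Fin dS → unitInterval) × (Fin dA → unitInterval)),
        |(∫ s, u s ∂(Q k)) - ∫ s, u s ∂(Q k')| ≤ LQ * ‖u‖ * dist k k')
    (u : (Fin dS → unitInterval) → ℝ)
    (hu_sup : ∀ s, |u s| ≤ 1)
    (hu_lip : ∀ s s', |u s - u s'| ≤ dist s s') :
    (∀ k : (Fin dS → unitInterval) × (Fin dA → unitInterval),
        |u k.1 - ∫ s, u s ∂(Q k)| ≤ 1 + max LQ 1) ∧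
      (∀ k k' : (Fin dS → unitInterval) × (Fin dA → unitInterval),
        |(u k.1 - ∫ s, u s ∂(Q k)) - (u k'.1 - ∫ s, u s ∂(Q k'))| ≤
          (1 + max LQ 1) * dist k k') := by
  have hcont : Continuous u := by
    have : LipschitzWith 1 u := by
      intro x y
      rw [edist_dist, edist_dist, ENNReal.coe_one, one_mul]
      exact ENNReal.ofReal_le_ofReal (by simpa [Real.dist_eq] using hu_lip x y)
    exact this.continuous
  set ub : BoundedContinuousFunction (Fin dS → unitInterval) ℝ :=
    BoundedContinuousFunction.mkOfBound ⟨u, hcont⟩ 2 (by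
      intro x y
      have := hu_lip x y
      have hx := hu_sup x
      have hy := hu_sup y
      rw [Real.dist_eq]
      have := abs_sub_abs_le_abs_sub (u x) (u y)
      calc |u x - u y| ≤ |u x| + |u y| := abs_sub _ _
        _ ≤ 2 := by linarith) with hub
  have hnorm : ‖ub‖ ≤ 1 :=
    BoundedContinuousFunction.norm_le (by norm_num) |>.2 (fun s => by
      simpa [ub, Real.norm_eq_abs] using hu_sup s)
  have hint : ∀ k, |∫ s, u s ∂(Q k)| ≤ 1 := by
    intro k
    have := norm_integral_le_of_norm_le_const (μ := Q k) (f := u) (C := 1)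
      (Filter.Eventually.of_forall fun s => by simpa [Real.norm_eq_abs] using hu_sup s)
    simpa [Real.norm_eq_abs, measure_univ] using this
  have hmax1 : (1:ℝ) ≤ max LQ 1 := le_max_right _ _
  constructor
  · intro k
    have h1 := hu_sup k.1
    have h2 := hint k
    calc |u k.1 - ∫ s, u s ∂(Q k)| ≤ |u k.1| + |∫ s, u s ∂(Q k)| := abs_sub _ _
      _ ≤ 1 + max LQ 1 := by linarith
  · intro k k'
    have h1 : |u k.1 - u k'.1| ≤ dist k k' := (hu_lip k.1 k'.1).trans (by rw [Prod.dist_eq]; exact le_max_left _ _)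
    have h2 : |(∫ s, u s ∂(Q k)) - ∫ s, u s ∂(Q k')| ≤ max LQ 1 * dist k k' := by
      have := hQ ub k k'
      have hd : (0:ℝ) ≤ dist k k' := dist_nonneg
      have hLQ1 : LQ * ‖ub‖ * dist k k' ≤ max LQ 1 * dist k k' := by
        have : LQ * ‖ub‖ ≤ max LQ 1 := by
          calc LQ * ‖ub‖ ≤ LQ * 1 := by nlinarith [norm_nonneg ub]
            _ = LQ := mul_one _
            _ ≤ max LQ 1 := le_max_left _ _
        exact mul_le_mul_of_nonneg_right this hd
      calc |(∫ s, u s ∂(Q k)) - ∫ s, u s ∂(Q k')| ≤ LQ * ‖ub‖ * dist k k' := by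
            simpa [ub] using this
        _ ≤ max LQ 1 * dist k k' := hLQ1
    calc |(u k.1 - ∫ s, u s ∂(Q k)) - (u k'.1 - ∫ s, u s ∂(Q k'))|
        = |(u k.1 - u k'.1) - ((∫ s, u s ∂(Q k)) - ∫ s, u s ∂(Q k'))| := by ring_nf
      _ ≤ |u k.1 - u k'.1| + |(∫ s, u s ∂(Q k)) - ∫ s, u s ∂(Q k')| := abs_sub _ _
      _ ≤ dist k k' + max LQ 1 * dist k k' := add_le_add h1 h2
      _ = (1 + max LQ 1) * dist k k' := by ring
end

section
/- Suppose the primal feasible set of the semi-infinite program is nonempty and y* ∈ 𝕂* attains the dual value J̃_n. Let y₁,…,y_N ∈ 𝕂* and let α̂ be a minimizer of the scenario program min{ c(α) : ‖α‖_R ≤ θ_P, y_j(A_n α − b) ≥ 0 for j = 1,…,N }, with value J_{n,N} := c(α̂). If δ ∈ B satisfies A_n α̂ − b + δ ∈ 𝕂, then 0 ≤ J_n − J_{n,N} ≤ y*(δ) (Lemma 4.8, perturbation error). -/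
open MeasureTheory


/-- separation from a closed convex cone -/
lemma dual_cone_sep {B : Type*} [NormedAddCommGroup B] [NormedSpace ℝ B]
    {𝕂 : Set B} (h𝕂_closed : IsClosed 𝕂) (h𝕂_convex : Convex ℝ 𝕂)
    (h𝕂_cone : ∀ z ∈ 𝕂, ∀ t : ℝ, 0 ≤ t → t • z ∈ 𝕂) (h0 : (0:B) ∈ 𝕂)
    {z : B} (hz : z ∉ 𝕂) :
    ∃ f : B →L[ℝ] ℝ, (∀ b' ∈ 𝕂, 0 ≤ f b') ∧ f z < 0 := by
  obtain ⟨f, u, hfu, huz⟩ := geometric_hahn_banach_closed_point h𝕂_convex h𝕂_closed hz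
  have hu0 : 0 < u := by simpa using hfu 0 h0
  refine ⟨-f, ?_, ?_⟩
  · intro a ha
    rcases le_or_gt (f a) 0 with h | h
    · simpa using h
    · exfalso
      have ht : (0:ℝ) ≤ (u+1)/f a := by positivity
      have := hfu _ (h𝕂_cone a ha _ ht)
      rw [_root_.map_smul] at this
      have : (u+1)/f a * f a = u + 1 := div_mul_cancel₀ _ (ne_of_gt h)
      simp only [smul_eq_mul] at *
      nlinarith [hfu _ (h𝕂_cone a ha _ ht)]
  · simp only [ContinuousLinearMap.neg_apply]
    linarith

/-- weak duality -/
lemma weak_dual {B : Type*} [NormedAddCommGroup B] [NormedSpace ℝ B]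
    {E : Type*} [NormedAddCommGroup E] [NormedSpace ℝ E]
    (An : E →L[ℝ] B) (c : E →L[ℝ] ℝ) (b : B) {θP : ℝ}
    {α₀ : E} (hn : ‖α₀‖ ≤ θP) (y : B →L[ℝ] ℝ) (hy : 0 ≤ y (An α₀ - b)) :
    y b - θP * ‖y.comp An - c‖ ≤ c α₀ := by
  have h2 : (y.comp An - c) α₀ ≤ ‖y.comp An - c‖ * θP := by
    have h1 : (y.comp An - c) α₀ ≤ ‖y.comp An - c‖ * ‖α₀‖ := by
      calc (y.comp An - c) α₀ ≤ |(y.comp An - c) α₀| := le_abs_self _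
      _ ≤ ‖y.comp An - c‖ * ‖α₀‖ := (y.comp An - c).le_opNorm α₀
    exact h1.trans (mul_le_mul_of_nonneg_left hn (norm_nonneg _))
  simp only [ContinuousLinearMap.sub_apply, ContinuousLinearMap.comp_apply] at h2
  rw [map_sub] at hy
  nlinarith [norm_nonneg (y.comp An - c)]

set_option maxHeartbeats 1000000 in
/-- key strong-duality step -/
lemma key_dual {B : Type*} [NormedAddCommGroup B] [NormedSpace ℝ B]
    {E : Type*} [NormedAddCommGroup E] [NormedSpace ℝ E] [FiniteDimensional ℝ E]
    {𝕂 : Set B} (h𝕂_closed : IsClosed 𝕂) (h𝕂_convex : Convex ℝ 𝕂)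
    (h𝕂_cone : ∀ z ∈ 𝕂, ∀ t : ℝ, 0 ≤ t → t • z ∈ 𝕂)
    (An : E →L[ℝ] B) (c : E →L[ℝ] ℝ) (b : B) {θP : ℝ} (hθP : 0 < θP)
    {α₀ : E} (hα₀K : An α₀ - b ∈ 𝕂) (hα₀n : ‖α₀‖ ≤ θP)
    (γ : ℝ) (hγ : ∀ α : E, ‖α‖ ≤ θP → An α - b ∈ 𝕂 → γ < c α) :
    ∃ yt : B →L[ℝ] ℝ, (∀ b' ∈ 𝕂, 0 ≤ yt b') ∧ γ ≤ yt b - θP * ‖yt.comp An - c‖ := by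
  classical
  have h0K : (0:B) ∈ 𝕂 := by simpa using h𝕂_cone _ hα₀K 0 le_rfl
  set K : Set E := Metric.closedBall 0 θP with hKdef
  have hKmem : ∀ α : E, α ∈ K ↔ ‖α‖ ≤ θP := fun α => mem_closedBall_zero_iff
  have hKcpt : IsCompact K := isCompact_closedBall 0 θP
  have hKconv : Convex ℝ K := convex_closedBall 0 θP
  have h0Kmem : (0:E) ∈ K := by rw [hKmem]; simpa using hθP.le
  have hα₀Kmem : α₀ ∈ K := (hKmem α₀).2 hα₀n
  set K' : Set E := K ∩ {β | c β ≤ γ} with hK'def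
  have hK'cpt : IsCompact K' :=
    hKcpt.inter_right (isClosed_le c.continuous continuous_const)
  -- separating functionals for points of K'
  have hsep : ∀ α ∈ K', ∃ f : B →L[ℝ] ℝ, (∀ b' ∈ 𝕂, 0 ≤ f b') ∧ f (An α - b) < 0 := by
    intro α hα
    have hnot : An α - b ∉ 𝕂 := by
      intro hmem
      exact absurd (hγ α ((hKmem α).1 hα.1) hmem) (not_lt.2 hα.2)
    exact dual_cone_sep h𝕂_closed h𝕂_convex h𝕂_cone h0K hnot
  choose! f hf1 hf2 using hsep
  -- finite subcover
  set U : K' → Set E := fun a => {β : E | f a.1 (An β - b) < 0} with hUdef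
  have hUopen : ∀ a : K', IsOpen (U a) := by
    intro a
    exact isOpen_lt ((f a.1).continuous.comp (An.continuous.sub continuous_const))
      continuous_const
  have hUcover : K' ⊆ ⋃ a : K', U a := by
    intro β hβ
    exact Set.mem_iUnion.2 ⟨⟨β, hβ⟩, hf2 β hβ⟩
  obtain ⟨t, ht⟩ := hK'cpt.elim_finite_subcover U hUopen hUcover
  -- index type
  -- affine functions g i = L i + k i
  set L : Option {a : K' // a ∈ t} → E →L[ℝ] ℝ := fun i => match i with
    | none => c
    | some j => -((f j.1.1).comp An) with hLdef
  set k : Option {a : K' // a ∈ t} → ℝ := fun i => match i with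
    | none => -γ
    | some j => f j.1.1 b with hkdef
  set g : Option {a : K' // a ∈ t} → E → ℝ := fun i β => L i β + k i with hgdef
  have hgnone : ∀ β, g none β = c β - γ := by intro β; simp [hgdef, hLdef, hkdef, sub_eq_add_neg]
  have hgsome : ∀ (j : {a : K' // a ∈ t}) β, g (some j) β = -(f j.1.1 (An β - b)) := by
    intro j β
    simp [hgdef, hLdef, hkdef, map_sub]
    ring
  -- pointwise positivity of max
  have hgpos : ∀ β ∈ K, ∃ i, 0 < g i β := by
    intro β hβ
    by_cases hc : c β ≤ γ
    · have hβK' : β ∈ K' := ⟨hβ, hc⟩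
      obtain ⟨a, ha, hamem⟩ := Set.mem_iUnion₂.1 (ht hβK')
      refine ⟨some ⟨a, ha⟩, ?_⟩
      rw [hgsome]
      have : f a.1 (An β - b) < 0 := hamem
      linarith
    · exact ⟨none, by rw [hgnone]; linarith [not_le.1 hc]⟩
  -- uniform positivity via compactness
  have hne : (Finset.univ : Finset (Option {a : K' // a ∈ t})).Nonempty := ⟨none, Finset.mem_univ _⟩
  set φ : E → ℝ := fun β => Finset.univ.sup' hne (fun i => g i β) with hφdef
  have hφcont : Continuous φ := by
    have : ∀ i ∈ (Finset.univ : Finset (Option {a : K' // a ∈ t})), Continuous (fun β => g i β) := by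
      intro i _
      exact ((L i).continuous.add continuous_const)
    have h := Continuous.finset_sup' (f := fun i (β : E) => g i β) hne this
    convert h using 1
    ext β
    simp [hφdef, Finset.sup'_apply]
  obtain ⟨β₀, hβ₀K, hmin⟩ := hKcpt.exists_isMinOn ⟨0, h0Kmem⟩ hφcont.continuousOn
  set ε2 : ℝ := φ β₀ with hε2def
  have hε2pos : 0 < ε2 := by
    obtain ⟨i, hi⟩ := hgpos β₀ hβ₀K
    exact lt_of_lt_of_le hi (Finset.le_sup' (fun i => g i β₀) (Finset.mem_univ i))
  have hφge : ∀ β ∈ K, ∃ i, ε2 ≤ g i β := by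
    intro β hβ
    obtain ⟨i, _, hi⟩ := Finset.exists_mem_eq_sup' hne (fun i => g i β)
    exact ⟨i, by rw [← hi]; exact hmin hβ⟩
  -- the convex sets in ℝ^ι
  set V : Set (Option {a : K' // a ∈ t} → ℝ) := {v | ∃ β ∈ K, ∀ i, g i β ≤ v i} with hVdef
  set O : Set (Option {a : K' // a ∈ t} → ℝ) := {v | ∀ i, v i < ε2} with hOdef
  have hVconv : Convex ℝ V := by
    rintro v₁ ⟨β₁, hβ₁, h₁⟩ v₂ ⟨β₂, hβ₂, h₂⟩ a a' ha ha' haa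
    refine ⟨a • β₁ + a' • β₂, hKconv hβ₁ hβ₂ ha ha' haa, ?_⟩
    intro i
    have : g i (a • β₁ + a' • β₂) = a * g i β₁ + a' * g i β₂ := by
      simp only [hgdef, map_add, _root_.map_smul, smul_eq_mul]
      linear_combination (-(k i)) * haa
    rw [this]
    simp only [Pi.add_apply, Pi.smul_apply, smul_eq_mul]
    have := mul_le_mul_of_nonneg_left (h₁ i) ha
    have := mul_le_mul_of_nonneg_left (h₂ i) ha'
    linarith
  have hOconv : Convex ℝ O := by
    rintro v₁ h₁ v₂ h₂ a a' ha ha' haa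
    intro i
    simp only [Pi.add_apply, Pi.smul_apply, smul_eq_mul]
    rcases eq_or_lt_of_le ha with rfl | hapos
    · simp only [zero_mul, zero_add]
      have : a' = 1 := by linarith
      rw [this]; simpa using h₂ i
    · have h1 := mul_lt_mul_of_pos_left (h₁ i) hapos
      have h2 := mul_le_mul_of_nonneg_left (le_of_lt (h₂ i)) ha'
      nlinarith
  have hOopen : IsOpen O := by
    have : O = ⋂ i, {v : Option {a : K' // a ∈ t} → ℝ | v i < ε2} := by
      ext v; simp [hOdef, Set.mem_iInter]
    rw [this]
    exact isOpen_iInter_of_finite fun i => isOpen_lt (continuous_apply i) continuous_const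
  have hdisj : Disjoint O V := by
    rw [Set.disjoint_left]
    rintro v hvO ⟨β, hβ, hv⟩
    obtain ⟨i, hi⟩ := hφge β hβ
    exact absurd (hi.trans (hv i)) (not_le.2 (hvO i))
  obtain ⟨ℓ, u, hO, hV⟩ := geometric_hahn_banach_open hOconv hOopen hVconv hdisj
  -- coordinates of ℓ
  set lam : Option {a : K' // a ∈ t} → ℝ :=
    fun i => ℓ (fun j => if i = j then (1:ℝ) else 0) with hlamdef
  have hℓ : ∀ v : Option {a : K' // a ∈ t} → ℝ, ℓ v = ∑ i, v i * lam i := by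
    intro v
    conv_lhs => rw [pi_eq_sum_univ v]
    rw [map_sum]
    exact Finset.sum_congr rfl fun i _ => by rw [_root_.map_smul]; simp [hlamdef, smul_eq_mul]
  have hv₀ : (fun i => g i α₀) ∈ V := ⟨α₀, hα₀Kmem, fun i => le_rfl⟩
  have hupos : 0 < u := by
    have h0O : (0 : Option {a : K' // a ∈ t} → ℝ) ∈ O := fun i => hε2pos
    simpa using hO 0 h0O
  have hlam_nonneg : ∀ i, 0 ≤ lam i := by
    intro i
    by_contra hneg
    push_neg at hneg
    have hVu : u ≤ ℓ (fun i => g i α₀) := hV _ hv₀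
    set s : ℝ := (u - ℓ (fun i => g i α₀) - 1) / lam i with hsdef
    have hs0 : 0 < s := div_pos_of_neg_of_neg (by linarith) hneg
    have hmem : ((fun j => g j α₀) + s • (fun j => if i = j then (1:ℝ) else 0)) ∈ V := by
      refine ⟨α₀, hα₀Kmem, fun j => ?_⟩
      have : 0 ≤ s * (if i = j then (1:ℝ) else 0) := by
        split
        · simpa using hs0.le
        · simp
      simp only [Pi.add_apply, Pi.smul_apply, smul_eq_mul]
      linarith
    have h2 := hV _ hmem
    rw [map_add, _root_.map_smul, smul_eq_mul] at h2
    have h3 : s * lam i = u - ℓ (fun i => g i α₀) - 1 := div_mul_cancel₀ _ (ne_of_lt hneg)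
    have h4 : ℓ (fun j => if i = j then (1:ℝ) else 0) = lam i := rfl
    rw [h4, h3] at h2
    linarith
  set Λ : ℝ := ∑ i, lam i with hΛdef
  have hΛnonneg : 0 ≤ Λ := Finset.sum_nonneg fun i _ => hlam_nonneg i
  have hΛpos : 0 < Λ := by
    rcases hΛnonneg.lt_or_eq with h | h
    · exact h
    · exfalso
      have hall := (Finset.sum_eq_zero_iff_of_nonneg fun i _ => hlam_nonneg i).1 h.symm
      have hz : ℓ (fun i => g i α₀) = 0 := by
        rw [hℓ]
        exact Finset.sum_eq_zero fun i _ => by rw [hall i (Finset.mem_univ i)]; ring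
      have := hV _ hv₀
      rw [hz] at this
      linarith
  have hεΛ : ε2 * Λ ≤ u := by
    by_contra hcon
    push_neg at hcon
    have hτlt : u / Λ < ε2 := (div_lt_iff₀ hΛpos).2 (by nlinarith)
    have hmem : (fun _ => u / Λ) ∈ O := fun i => hτlt
    have h1 := hO _ hmem
    rw [hℓ] at h1
    have h2 : ∑ i, u / Λ * lam i = u := by
      rw [← Finset.mul_sum, ← hΛdef, div_mul_cancel₀ _ (ne_of_gt hΛpos)]
    rw [h2] at h1
    exact lt_irrefl _ h1
  have hmainK : ∀ β ∈ K, ε2 * Λ ≤ ∑ i, g i β * lam i := by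
    intro β hβ
    have h1 : u ≤ ℓ (fun i => g i β) := hV _ ⟨β, hβ, fun i => le_rfl⟩
    rw [hℓ] at h1
    linarith
  -- assemble the dual vector
  set Y : B →L[ℝ] ℝ := ∑ j : {a : K' // a ∈ t}, lam (some j) • f j.1.1 with hYdef
  have hYapp : ∀ z : B, Y z = ∑ j : {a : K' // a ∈ t}, lam (some j) * f j.1.1 z := by
    intro z
    rw [hYdef]
    simp [ContinuousLinearMap.sum_apply]
  have hYmem : ∀ b' ∈ 𝕂, 0 ≤ Y b' := by
    intro b' hb'
    rw [hYapp]
    exact Finset.sum_nonneg fun j _ =>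
      mul_nonneg (hlam_nonneg _) (hf1 _ j.1.2 b' hb')
  have hkey : ∀ β ∈ K, ε2 * Λ ≤ lam none * (c β - γ) - Y (An β - b) := by
    intro β hβ
    have h1 := hmainK β hβ
    rw [Fintype.sum_option] at h1
    rw [hgnone β] at h1
    have h2 : ∑ j : {a : K' // a ∈ t}, g (some j) β * lam (some j) = -Y (An β - b) := by
      rw [hYapp, ← Finset.sum_neg_distrib]
      exact Finset.sum_congr rfl fun j _ => by rw [hgsome]; ring
    rw [h2] at h1
    linarith
  have hlnpos : 0 < lam none := by
    rcases (hlam_nonneg none).lt_or_eq with h | h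
    · exact h
    · exfalso
      have h1 := hkey α₀ hα₀Kmem
      rw [← h, zero_mul, zero_sub] at h1
      have hY0 : 0 ≤ Y (An α₀ - b) := hYmem _ hα₀K
      linarith [mul_pos hε2pos hΛpos]
  set yt : B →L[ℝ] ℝ := (lam none)⁻¹ • Y with hytdef
  refine ⟨yt, ?_, ?_⟩
  · intro b' hb'
    rw [hytdef]
    simp only [ContinuousLinearMap.smul_apply, smul_eq_mul]
    exact mul_nonneg (inv_nonneg.2 hlnpos.le) (hYmem b' hb')
  · -- the dual value bound
    have hG : ∀ β ∈ K, γ - yt b ≤ (c - yt.comp An) β := by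
      intro β hβ
      have h1 := hkey β hβ
      have h4 : 0 ≤ c β - γ - (lam none)⁻¹ * Y (An β - b) := by
        have h5 : 0 ≤ lam none * (c β - γ) - Y (An β - b) :=
          le_trans (mul_pos hε2pos hΛpos).le h1
        have h6 := mul_le_mul_of_nonneg_left h5 (inv_nonneg.2 hlnpos.le)
        rw [mul_zero, mul_sub, ← mul_assoc, inv_mul_cancel₀ (ne_of_gt hlnpos), one_mul] at h6
        linarith
      have h7 : yt (An β - b) = (lam none)⁻¹ * Y (An β - b) := by
        rw [hytdef]; simp
      have h8 : yt (An β - b) = yt (An β) - yt b := map_sub yt _ _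
      have h9 : (c - yt.comp An) β = c β - yt (An β) := by
        simp [ContinuousLinearMap.sub_apply]
      rw [h9]
      rw [h7] at h8
      linarith
    have hs0 : γ - yt b ≤ 0 := by
      have := hG 0 h0Kmem
      simpa using this
    have habs : ∀ β : E, ‖β‖ ≤ θP → |(c - yt.comp An) β| ≤ -(γ - yt b) := by
      intro β hβ
      have h1 := hG β ((hKmem β).2 hβ)
      have h2 := hG (-β) ((hKmem (-β)).2 (by simpa using hβ))
      rw [map_neg] at h2
      rw [abs_le]
      constructor <;> linarith
    have hnorm : ‖c - yt.comp An‖ ≤ -(γ - yt b) / θP := by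
      apply ContinuousLinearMap.opNorm_le_bound _
        (div_nonneg (neg_nonneg.2 hs0) hθP.le)
      intro x
      rcases eq_or_ne x 0 with rfl | hx
      · simp
      · have hxn : 0 < ‖x‖ := norm_pos_iff.2 hx
        have hx' : ‖(θP / ‖x‖) • x‖ ≤ θP := by
          rw [norm_smul, Real.norm_eq_abs, abs_of_pos (by positivity),
            div_mul_cancel₀ _ (ne_of_gt hxn)]
        have h1 := habs _ hx'
        rw [_root_.map_smul, smul_eq_mul, abs_mul,
          abs_of_pos (show (0:ℝ) < θP / ‖x‖ by positivity)] at h1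
        have h9 : θP * |(c - yt.comp An) x| ≤ -(γ - yt b) * ‖x‖ := by
          have h8 := mul_le_mul_of_nonneg_left h1 hxn.le
          calc θP * |(c - yt.comp An) x|
              = ‖x‖ * (θP / ‖x‖ * |(c - yt.comp An) x|) := by
                field_simp
          _ ≤ ‖x‖ * -(γ - yt b) := h8
          _ = -(γ - yt b) * ‖x‖ := mul_comm _ _
        rw [Real.norm_eq_abs, div_mul_eq_mul_div, le_div_iff₀ hθP]
        linarith
    have hrev : ‖yt.comp An - c‖ = ‖c - yt.comp An‖ := norm_sub_rev _ _
    rw [hrev]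
    have h10 : ‖c - yt.comp An‖ * θP ≤ -(γ - yt b) := (le_div_iff₀ hθP).1 hnorm
    nlinarith


/-- **Lemma 4.8 (perturbation error).**
If the primal feasible set is nonempty, `y*` attains the dual value `J̃_n`, `α̂` is a
minimizer of the scenario program with samples `y₁,…,y_N ∈ 𝕂*`, and `δ ∈ B` satisfies
`A_n α̂ − b + δ ∈ 𝕂`, then `0 ≤ J_n − J_{n,N} ≤ y*(δ)`. -/
theorem stmt_11
    {B : Type*} [NormedAddCommGroup B] [NormedSpace ℝ B]
    {E : Type*} [NormedAddCommGroup E] [NormedSpace ℝ E] [FiniteDimensional ℝ E]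
    (𝕂 : Set B) (h𝕂_closed : IsClosed 𝕂) (h𝕂_convex : Convex ℝ 𝕂)
    (h𝕂_cone : ∀ z ∈ 𝕂, ∀ t : ℝ, 0 ≤ t → t • z ∈ 𝕂)
    (An : E →L[ℝ] B) (c : E →L[ℝ] ℝ) (b : B) (θP : ℝ) (hθP : 0 < θP)
    -- the semi-infinite program is feasible
    (hfeas : ∃ α : E, An α - b ∈ 𝕂 ∧ ‖α‖ ≤ θP)
    -- `y*` attains the dual value
    (ystar : B →L[ℝ] ℝ) (hystar_mem : ∀ b' ∈ 𝕂, 0 ≤ ystar b')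
    (hystar_attain : ystar b - θP * ‖ystar.comp An - c‖ =
      sSup {r : ℝ | ∃ y : B →L[ℝ] ℝ, (∀ b' ∈ 𝕂, 0 ≤ y b') ∧
        r = y b - θP * ‖y.comp An - c‖})
    -- samples and a minimizer of the scenario program
    (N : ℕ) (y : Fin N → (B →L[ℝ] ℝ)) (hy_mem : ∀ j, ∀ b' ∈ 𝕂, 0 ≤ y j b')
    (αhat : E) (hαhat_feas : ‖αhat‖ ≤ θP ∧ ∀ j, 0 ≤ y j (An αhat - b))
    (hαhat_min : ∀ α : E, ‖α‖ ≤ θP → (∀ j, 0 ≤ y j (An α - b)) → c αhat ≤ c α)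
    -- a perturbation restoring feasibility
    (δ : B) (hδ : An αhat - b + δ ∈ 𝕂) :
    0 ≤ sInf {r : ℝ | ∃ α : E, An α - b ∈ 𝕂 ∧ ‖α‖ ≤ θP ∧ r = c α} - c αhat ∧
      sInf {r : ℝ | ∃ α : E, An α - b ∈ 𝕂 ∧ ‖α‖ ≤ θP ∧ r = c α} - c αhat ≤ ystar δ := by
  obtain ⟨α₀, hα₀K, hα₀n⟩ := hfeas
  set S : Set ℝ := {r : ℝ | ∃ α : E, An α - b ∈ 𝕂 ∧ ‖α‖ ≤ θP ∧ r = c α} with hSdef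
  have hSne : S.Nonempty := ⟨c α₀, α₀, hα₀K, hα₀n, rfl⟩
  have hSlb : ∀ r ∈ S, c αhat ≤ r := by
    rintro r ⟨α, hαK, hαn, rfl⟩
    exact hαhat_min α hαn fun j => hy_mem j _ hαK
  have h1 : c αhat ≤ sInf S := le_csInf hSne hSlb
  refine ⟨by linarith, ?_⟩
  have hJle : ystar b - θP * ‖ystar.comp An - c‖ ≤ c αhat + ystar δ := by
    have hy' : 0 ≤ ystar (An αhat - (b - δ)) := by
      rw [show An αhat - (b - δ) = An αhat - b + δ by abel]
      exact hystar_mem _ hδ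
    have h2 := weak_dual An c (b - δ) hαhat_feas.1 ystar hy'
    rw [map_sub] at h2
    linarith
  have hbdd : BddAbove {r : ℝ | ∃ y : B →L[ℝ] ℝ, (∀ b' ∈ 𝕂, 0 ≤ y b') ∧
      r = y b - θP * ‖y.comp An - c‖} := by
    refine ⟨c α₀, ?_⟩
    rintro r ⟨y', hy', rfl⟩
    exact weak_dual An c b hα₀n y' (hy' _ hα₀K)
  have h2 : sInf S ≤ ystar b - θP * ‖ystar.comp An - c‖ := by
    apply le_of_forall_lt
    intro γ hγ
    obtain ⟨γ', hγγ', hγ'S⟩ := exists_between hγ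
    have hγ'lt : ∀ α : E, ‖α‖ ≤ θP → An α - b ∈ 𝕂 → γ' < c α := by
      intro α hn hK
      exact lt_of_lt_of_le hγ'S (csInf_le ⟨c αhat, hSlb⟩ ⟨α, hK, hn, rfl⟩)
    obtain ⟨yt, hytmem, hytval⟩ :=
      key_dual h𝕂_closed h𝕂_convex h𝕂_cone An c b hθP hα₀K hα₀n γ' hγ'lt
    have h3 : yt b - θP * ‖yt.comp An - c‖ ≤
        sSup {r : ℝ | ∃ y : B →L[ℝ] ℝ, (∀ b' ∈ 𝕂, 0 ≤ y b') ∧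
          r = y b - θP * ‖y.comp An - c‖} := le_csSup hbdd ⟨yt, hytmem, rfl⟩
    rw [← hystar_attain] at h3
    linarith
  linarith
end

section
/- Define m := min{1, θ_P/‖α − q‖} • (α − q) if α ≠ q, and m := 0 if α = q. Then ‖m‖ ≤ θ_P, and m is the unique minimizer over the closed ball {β : ‖β‖ ≤ θ_P} of the function β ↦ ⟨q,β⟩ + (1/2)‖β − α‖²; that is, for every β with ‖β‖ ≤ θ_P one has ⟨q,m⟩ + (1/2)‖m − α‖² ≤ ⟨q,β⟩ + (1/2)‖β − α‖², with equality only when β = m (Lemma 5.1, explicit description of the operator 𝕋 for the ℓ2-norm). -/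
open RealInnerProductSpace

/-- **Lemma 5.1 (explicit description of the operator `𝕋` for the ℓ2-norm).**
The point `m := min{1, θ_P/‖α − q‖} • (α − q)` satisfies `‖m‖ ≤ θ_P` and is the unique
minimizer of `β ↦ ⟨q,β⟩ + ½‖β − α‖²` over the closed ball `{β : ‖β‖ ≤ θ_P}`. -/
theorem stmt_14
    {H : Type*} [NormedAddCommGroup H] [InnerProductSpace ℝ H]
    (θP : ℝ) (hθP : 0 < θP) (q α : H)
    (m : H) (hm : m = min 1 (θP / ‖α - q‖) • (α - q)) :
    ‖m‖ ≤ θP ∧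
      ∀ β : H, ‖β‖ ≤ θP →
        (⟪q, m⟫ + 1 / 2 * ‖m - α‖ ^ 2 ≤ ⟪q, β⟫ + 1 / 2 * ‖β - α‖ ^ 2 ∧
          (⟪q, m⟫ + 1 / 2 * ‖m - α‖ ^ 2 = ⟪q, β⟫ + 1 / 2 * ‖β - α‖ ^ 2 → β = m)) := by
  set a : H := α - q with ha
  set c : ℝ := min 1 (θP / ‖a‖) with hc
  -- norm bound
  have hc0 : 0 ≤ c := by
    rcases eq_or_ne a 0 with h | h
    · simp [hc, h, zero_le_one]
    · exact le_min zero_le_one (div_nonneg hθP.le (norm_nonneg a))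
  have hnm : ‖m‖ ≤ θP := by
    rw [hm, norm_smul, Real.norm_eq_abs, abs_of_nonneg hc0]
    rcases le_or_gt ‖a‖ θP with h | h
    · calc c * ‖a‖ ≤ 1 * ‖a‖ := by
            apply mul_le_mul_of_nonneg_right (min_le_left _ _) (norm_nonneg a)
        _ ≤ θP := by simpa using h
    · have hna : (0:ℝ) < ‖a‖ := lt_trans hθP h
      calc c * ‖a‖ ≤ (θP / ‖a‖) * ‖a‖ := by
            apply mul_le_mul_of_nonneg_right (min_le_right _ _) (norm_nonneg a)
        _ = θP := by field_simp
  -- key: first order optimality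
  have hkey : ∀ β : H, ‖β‖ ≤ θP → (0:ℝ) ≤ ⟪β - m, m - a⟫ := by
    intro β hβ
    rcases le_or_gt ‖a‖ θP with h | h
    · -- m = a
      have hma : m = a := by
        rcases eq_or_ne a 0 with h0 | h0
        · simp [hm, h0]
        · have : (1:ℝ) ≤ θP / ‖a‖ := (one_le_div (norm_pos_iff.mpr h0)).mpr h
          have hc1 : c = 1 := min_eq_left this
          rw [hm, hc1, one_smul]
      simp [hma]
    · have hna : (0:ℝ) < ‖a‖ := lt_trans hθP h
      have hclt : c = θP / ‖a‖ := min_eq_right ((div_le_one hna).mpr h.le)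
      have hma : m - a = (c - 1) • a := by
        rw [hm, sub_smul, one_smul]
      rw [hma, real_inner_smul_right]
      have h1 : ⟪β - m, a⟫ = ⟪β, a⟫ - c * ‖a‖^2 := by
        rw [hm, inner_sub_left, real_inner_smul_left, real_inner_self_eq_norm_sq]
      rw [h1]
      have h2 : ⟪β, a⟫ ≤ θP * ‖a‖ :=
        le_trans (real_inner_le_norm β a)
          (mul_le_mul_of_nonneg_right hβ (norm_nonneg a))
      have h3 : c * ‖a‖^2 = θP * ‖a‖ := by
        rw [hclt]; field_simp
      have h4 : c - 1 ≤ 0 := by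
        have := min_le_left (1:ℝ) (θP / ‖a‖); linarith
      nlinarith [h2, h3, h4]
  -- expansion identity
  have hexp : ∀ β : H, ⟪q, β⟫ + 1 / 2 * ‖β - α‖ ^ 2
      = ⟪q, m⟫ + 1 / 2 * ‖m - α‖ ^ 2 + 1 / 2 * ‖β - m‖ ^ 2 + ⟪β - m, m - a⟫ := by
    intro β
    have e1 : β - α = (β - m) + (m - α) := by abel
    have e2 : m - a = (m - α) + q := by rw [ha]; abel
    rw [e1, e2, norm_add_sq_real, inner_add_right]
    have e3 : ⟪q, β⟫ = ⟪q, m⟫ + ⟪β - m, q⟫ := by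
      rw [inner_sub_left, real_inner_comm β q, real_inner_comm m q]; ring
    rw [e3]; ring
  refine ⟨hnm, fun β hβ => ?_⟩
  have hk := hkey β hβ
  have he := hexp β
  constructor
  · nlinarith [sq_nonneg ‖β - m‖]
  · intro heq
    have : ‖β - m‖ ^ 2 = 0 := by nlinarith [sq_nonneg ‖β - m‖]
    have hbm : β - m = 0 := by
      have := (pow_eq_zero_iff (n := 2) (by norm_num)).mp this
      simpa using this
    exact sub_eq_zero.mp hbm
end

section
/- Under the semi-infinite regularity assumption, for every ŷ ∈ 𝕂* and every α̂ ∈ E with ‖α̂‖_R ≤ θ_P one has the sandwich bounds ŷ(b) − θ_P‖A_n* ŷ − c‖_{R*} ≤ J_n ≤ c(α̂) + sup{ y(b − A_n α̂) : y ∈ 𝕂*, ‖y‖_* ≤ θ_D }. In particular, the lower and upper estimates J^LB and J^UB produced by evaluating the dual objective at any dual-feasible point and the penalized primal objective at any norm-feasible point bracket J_n (first assertion of Theorem 5.2). -/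
open MeasureTheory

open Metric Set Pointwise

lemma aux_surj {B : Type*} [NormedAddCommGroup B] [NormedSpace ℝ B]
    {E : Type*} [NormedAddCommGroup E] [NormedSpace ℝ E] [FiniteDimensional ℝ E]
    (𝕂 : Set B) (h𝕂_closed : IsClosed 𝕂) (h𝕂_convex : Convex ℝ 𝕂)
    (h𝕂_cone : ∀ z ∈ 𝕂, ∀ t : ℝ, 0 ≤ t → t • z ∈ 𝕂) (h0 : (0:B) ∈ 𝕂)
    (An : E →L[ℝ] B) (γ : ℝ) (hγ : 0 < γ)
    (hinfsup : ∀ y : B →L[ℝ] ℝ, (∀ b' ∈ 𝕂, 0 ≤ y b') → γ * ‖y‖ ≤ ‖y.comp An‖)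
    (v : B) (hv : ‖v‖ ≤ γ) : ∃ α : E, ‖α‖ ≤ 1 ∧ An α - v ∈ 𝕂 := by
  set C : Set B := (⇑An '' Metric.closedBall 0 1) + (-𝕂) with hC
  have hCclosed : IsClosed C :=
    IsClosed.add_left_of_isCompact h𝕂_closed.neg
      ((isCompact_closedBall (0:E) 1).image An.continuous)
  have hCconv : Convex ℝ C := by
    refine Convex.add ?_ h𝕂_convex.neg
    have := (convex_closedBall (0:E) 1).linear_image (An : E →ₗ[ℝ] B)
    simpa using this
  by_contra hcon
  push_neg at hcon
  have hvC : v ∉ C := by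
    intro hvmem
    rw [Set.mem_add] at hvmem
    obtain ⟨a, ha, kk, hkk, hsum⟩ := hvmem
    obtain ⟨α, hα, rfl⟩ := ha
    rw [Set.mem_neg] at hkk
    have hαn : ‖α‖ ≤ 1 := by simpa using hα
    have hmem : An α - v ∈ 𝕂 := by
      have h' : An α - v = -kk := by rw [← hsum]; abel
      rw [h']; exact hkk
    exact absurd hmem (hcon α hαn)
  obtain ⟨f, u, hfu, huv⟩ := geometric_hahn_banach_closed_point hCconv hCclosed hvC
  have hmemC : ∀ α : E, ‖α‖ ≤ 1 → ∀ k ∈ 𝕂, An α - k ∈ C := by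
    intro α hα k hk
    rw [Set.mem_add]
    exact ⟨An α, ⟨α, by simpa using hα, rfl⟩, -k, by rwa [Set.mem_neg, neg_neg], by abel⟩
  have hu0 : 0 < u := by
    have := hfu _ (hmemC 0 (by simp) 0 h0)
    simpa using this
  have hfK : ∀ k ∈ 𝕂, 0 ≤ f k := by
    intro k hk
    by_contra hneg
    push_neg at hneg
    set t : ℝ := (u + 1) / (-f k) with htdef
    have ht : (0:ℝ) ≤ t := le_of_lt (div_pos (by linarith) (by linarith))
    have h1 := hfu _ (hmemC 0 (by simp) _ (h𝕂_cone k hk t ht))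
    simp only [map_zero, zero_sub, map_neg, _root_.map_smul, smul_eq_mul] at h1
    have h3 : t * (-f k) = u + 1 := div_mul_cancel₀ _ (by linarith)
    have h4 : -(t * f k) = t * (-f k) := by ring
    linarith
  have hfAn : ‖f.comp An‖ ≤ u := by
    refine ContinuousLinearMap.opNorm_le_bound _ hu0.le (fun α => ?_)
    rcases eq_or_ne α 0 with rfl | hα0
    · simp
    · have hn : (0:ℝ) < ‖α‖ := norm_pos_iff.mpr hα0
      have hb1 : ∀ β : E, ‖β‖ ≤ 1 → f (An β) < u := by
        intro β hβ
        have := hfu _ (hmemC β hβ 0 h0)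
        simpa using this
      have hnorm1 : ‖‖α‖⁻¹ • α‖ = 1 := by
        rw [norm_smul, Real.norm_eq_abs, abs_of_nonneg (inv_nonneg.mpr hn.le),
          inv_mul_cancel₀ hn.ne']
      have h1 : f (An (‖α‖⁻¹ • α)) < u := hb1 _ (le_of_eq hnorm1)
      have h2 : f (An (-(‖α‖⁻¹ • α))) < u := hb1 _ (by rw [norm_neg]; exact le_of_eq hnorm1)
      have h3 : f (An (‖α‖⁻¹ • α)) = ‖α‖⁻¹ * f (An α) := by simp
      have h4 : f (An (-(‖α‖⁻¹ • α))) = -(‖α‖⁻¹ * f (An α)) := by simp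
      rw [h3] at h1; rw [h4] at h2
      have h5 : f (An α) < u * ‖α‖ := by
        have := mul_lt_mul_of_pos_left h1 hn
        rwa [← mul_assoc, mul_inv_cancel₀ hn.ne', one_mul, mul_comm ‖α‖ u] at this
      have h6 : -f (An α) < u * ‖α‖ := by
        have h2' : ‖α‖⁻¹ * (-f (An α)) < u := by linarith
        have := mul_lt_mul_of_pos_left h2' hn
        rwa [← mul_assoc, mul_inv_cancel₀ hn.ne', one_mul, mul_comm ‖α‖ u] at this
      have habs : |f (An α)| ≤ u * ‖α‖ := abs_le.mpr ⟨by linarith, h5.le⟩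
      simpa [ContinuousLinearMap.comp_apply, Real.norm_eq_abs] using habs
  have hchain : γ * ‖f‖ < γ * ‖f‖ := by
    calc γ * ‖f‖ ≤ ‖f.comp An‖ := hinfsup f hfK
    _ ≤ u := hfAn
    _ < f v := huv
    _ ≤ ‖f‖ * ‖v‖ := by
        calc f v ≤ |f v| := le_abs_self _
        _ = ‖f v‖ := rfl
        _ ≤ ‖f‖ * ‖v‖ := f.le_opNorm v
    _ ≤ ‖f‖ * γ := mul_le_mul_of_nonneg_left hv (norm_nonneg f)
    _ = γ * ‖f‖ := mul_comm _ _
  exact absurd hchain (lt_irrefl _)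

set_option maxHeartbeats 1000000

/-- **Theorem 5.2 (first assertion): posterior sandwich bounds.**
Under the semi-infinite regularity assumption, for every dual-feasible `ŷ ∈ 𝕂*` and every
norm-feasible `α̂` (`‖α̂‖_R ≤ θ_P`),
`ŷ(b) − θ_P‖A_n* ŷ − c‖_{R*} ≤ J_n ≤ c(α̂) + sup{ y(b − A_n α̂) : y ∈ 𝕂*, ‖y‖_* ≤ θ_D }`. -/
theorem stmt_15
    {B : Type*} [NormedAddCommGroup B] [NormedSpace ℝ B]
    {E : Type*} [NormedAddCommGroup E] [NormedSpace ℝ E] [FiniteDimensional ℝ E]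
    (𝕂 : Set B) (h𝕂_closed : IsClosed 𝕂) (h𝕂_convex : Convex ℝ 𝕂)
    (h𝕂_cone : ∀ z ∈ 𝕂, ∀ t : ℝ, 0 ≤ t → t • z ∈ 𝕂)
    (An : E →L[ℝ] B) (c : E →L[ℝ] ℝ) (b : B) (θP : ℝ) (hθP : 0 < θP)
    -- regularity (i): primal feasibility
    (hfeas : ∃ α : E, An α - b ∈ 𝕂 ∧ ‖α‖ ≤ θP)
    -- regularity (ii): inf-sup condition
    (γ : ℝ) (hγ : 0 < γ)
    (hinfsup : ∀ y : B →L[ℝ] ℝ, (∀ b' ∈ 𝕂, 0 ≤ y b') → γ * ‖y‖ ≤ ‖y.comp An‖)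
    (hbθ : ‖b‖ < γ * θP)
    (yhat : B →L[ℝ] ℝ) (hyhat : ∀ b' ∈ 𝕂, 0 ≤ yhat b')
    (αhat : E) (hαhat : ‖αhat‖ ≤ θP) :
    yhat b - θP * ‖yhat.comp An - c‖ ≤
        sInf {r : ℝ | ∃ α : E, An α - b ∈ 𝕂 ∧ ‖α‖ ≤ θP ∧ r = c α} ∧
      sInf {r : ℝ | ∃ α : E, An α - b ∈ 𝕂 ∧ ‖α‖ ≤ θP ∧ r = c α} ≤
        c αhat + sSup {t : ℝ | ∃ y : B →L[ℝ] ℝ,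
          ((∀ b' ∈ 𝕂, 0 ≤ y b') ∧ ‖y‖ ≤ 2 * θP * ‖c‖ / (γ * θP - ‖b‖)) ∧
            t = y (b - An αhat)} := by
  classical
  set S1 : Set ℝ := {r : ℝ | ∃ α : E, An α - b ∈ 𝕂 ∧ ‖α‖ ≤ θP ∧ r = c α} with hS1
  obtain ⟨α₀, hα₀K, hα₀n⟩ := hfeas
  have hS1ne : S1.Nonempty := ⟨c α₀, α₀, hα₀K, hα₀n, rfl⟩
  have h0K : (0:B) ∈ 𝕂 := by simpa using h𝕂_cone _ hα₀K 0 le_rfl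
  have hLB : ∀ r ∈ S1, yhat b - θP * ‖yhat.comp An - c‖ ≤ r := by
    rintro r ⟨α, hK, hn, rfl⟩
    have h1 : 0 ≤ yhat (An α - b) := hyhat _ hK
    rw [map_sub] at h1
    have h2 : (yhat.comp An - c) α ≤ θP * ‖yhat.comp An - c‖ := by
      calc (yhat.comp An - c) α ≤ |(yhat.comp An - c) α| := le_abs_self _
      _ ≤ ‖yhat.comp An - c‖ * ‖α‖ := (yhat.comp An - c).le_opNorm α
      _ ≤ ‖yhat.comp An - c‖ * θP := mul_le_mul_of_nonneg_left hn (norm_nonneg _)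
      _ = θP * ‖yhat.comp An - c‖ := mul_comm _ _
    have h3 : (yhat.comp An - c) α = yhat (An α) - c α := by simp
    linarith
  have hBdd : BddBelow S1 := ⟨_, hLB⟩
  refine ⟨le_csInf hS1ne hLB, ?_⟩
  set D0 : ℝ := γ * θP - ‖b‖ with hD0def
  have hD0 : 0 < D0 := by rw [hD0def]; linarith
  set θD : ℝ := 2 * θP * ‖c‖ / D0 with hθDdef
  have hθD0 : 0 ≤ θD := by rw [hθDdef]; positivity
  set x : B := An αhat - b with hxdef
  set d : ℝ := Metric.infDist x 𝕂 with hddef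
  have hd0 : 0 ≤ d := Metric.infDist_nonneg
  set S2 : Set ℝ := {t : ℝ | ∃ y : B →L[ℝ] ℝ,
      ((∀ b' ∈ 𝕂, 0 ≤ y b') ∧ ‖y‖ ≤ θD) ∧ t = y (b - An αhat)} with hS2
  have hS2bdd : BddAbove S2 := by
    refine ⟨θD * ‖b - An αhat‖, ?_⟩
    rintro t ⟨y, ⟨hyK, hyn⟩, rfl⟩
    calc y (b - An αhat) ≤ |y (b - An αhat)| := le_abs_self _
    _ ≤ ‖y‖ * ‖b - An αhat‖ := y.le_opNorm _
    _ ≤ θD * ‖b - An αhat‖ := mul_le_mul_of_nonneg_right hyn (norm_nonneg _)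
  have h0S2 : (0:ℝ) ∈ S2 := ⟨0, ⟨fun b' _ => by simp, by simpa using hθD0⟩, by simp⟩
  have hadd𝕂 : ∀ z₁ ∈ 𝕂, ∀ z₂ ∈ 𝕂, z₁ + z₂ ∈ 𝕂 := by
    intro z₁ h1 z₂ h2
    have hmid := h𝕂_convex h1 h2 (by norm_num : (0:ℝ) ≤ 1/2) (by norm_num : (0:ℝ) ≤ 1/2)
      (by norm_num)
    have h2' := h𝕂_cone _ hmid 2 (by norm_num)
    have heq : (2:ℝ) • ((1/2:ℝ) • z₁ + (1/2:ℝ) • z₂) = z₁ + z₂ := by module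
    rwa [heq] at h2'
  have claimA : sInf S1 ≤ c αhat + θD * d := by
    refine le_of_forall_pos_le_add (fun ε' hε' => ?_)
    set ε : ℝ := ε' / (θD + 1) with hεdef
    have hε : 0 < ε := by rw [hεdef]; exact div_pos hε' (by linarith)
    have hlt : Metric.infDist x 𝕂 < d + ε := by rw [← hddef]; linarith
    obtain ⟨k, hkK, hkd⟩ := (Metric.infDist_lt_iff ⟨0, h0K⟩).mp hlt
    have hxk : ‖x - k‖ < d + ε := by rwa [← dist_eq_norm]
    set dε : ℝ := d + ε with hdεdef
    have hdε0 : 0 < dε := by rw [hdεdef]; linarith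
    set t : ℝ := dε / (D0 + dε) with htdef
    have hden : 0 < D0 + dε := by linarith
    have ht0 : 0 < t := by rw [htdef]; exact div_pos hdε0 hden
    have ht1 : t < 1 := by rw [htdef]; rw [div_lt_one hden]; linarith
    have htP : 0 < t * θP := mul_pos ht0 hθP
    have htD : (1 - t) * dε = t * D0 := by rw [htdef]; field_simp; ring
    set u : B := (t * θP)⁻¹ • (t • b - (1 - t) • (x - k)) with hudef
    have hun : ‖u‖ ≤ γ := by
      have h1 : ‖t • b - (1-t) • (x - k)‖ ≤ t * ‖b‖ + (1-t) * ‖x - k‖ := by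
        calc ‖t • b - (1-t) • (x-k)‖ ≤ ‖t • b‖ + ‖(1-t) • (x-k)‖ := norm_sub_le _ _
        _ = t * ‖b‖ + (1-t) * ‖x-k‖ := by
            rw [norm_smul, norm_smul, Real.norm_eq_abs, Real.norm_eq_abs, abs_of_pos ht0,
              abs_of_pos (by linarith : (0:ℝ) < 1 - t)]
      have ha1 : (1-t)*‖x-k‖ ≤ (1-t)*dε := mul_le_mul_of_nonneg_left hxk.le (by linarith)
      have ha2 : t*‖b‖ + t*D0 = t*(γ*θP) := by rw [hD0def]; ring
      have h2 : t*‖b‖ + (1-t)*‖x-k‖ ≤ t * (γ * θP) := by linarith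
      calc ‖u‖ = (t*θP)⁻¹ * ‖t • b - (1-t)•(x-k)‖ := by
            rw [hudef, norm_smul, Real.norm_eq_abs, abs_of_pos (inv_pos.mpr htP)]
      _ ≤ (t*θP)⁻¹ * (t * (γ*θP)) := by
            exact mul_le_mul_of_nonneg_left (h1.trans h2) (inv_nonneg.mpr htP.le)
      _ = γ := by field_simp
    obtain ⟨β, hβn, hβK⟩ := aux_surj 𝕂 h𝕂_closed h𝕂_convex h𝕂_cone h0K An γ hγ hinfsup u hun
    set α' : E := (1 - t) • αhat + (t * θP) • β with hα'def
    have hα'n : ‖α'‖ ≤ θP := by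
      calc ‖α'‖ ≤ ‖(1-t)•αhat‖ + ‖(t*θP)•β‖ := norm_add_le _ _
      _ = (1-t)*‖αhat‖ + (t*θP)*‖β‖ := by
          rw [norm_smul, norm_smul, Real.norm_eq_abs, Real.norm_eq_abs,
            abs_of_pos (by linarith : (0:ℝ) < 1 - t), abs_of_pos htP]
      _ ≤ (1-t)*θP + (t*θP)*1 := by
          exact add_le_add (mul_le_mul_of_nonneg_left hαhat (by linarith))
            (mul_le_mul_of_nonneg_left hβn htP.le)
      _ = θP := by ring
    have hfeas' : An α' - b ∈ 𝕂 := by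
      have hu' : (t*θP) • u = t • b - (1-t) • (x - k) := smul_inv_smul₀ htP.ne' _
      have hkey : An α' - b = (t*θP) • (An β - u) + (1-t) • k := by
        rw [hα'def, map_add, _root_.map_smul, _root_.map_smul, smul_sub, hu', hxdef]
        module
      rw [hkey]
      exact hadd𝕂 _ (h𝕂_cone _ hβK _ htP.le) _ (h𝕂_cone _ hkK _ (by linarith))
    have hmemS1 : c α' ∈ S1 := ⟨α', hfeas', hα'n, rfl⟩
    have hcβ : |c β| ≤ ‖c‖ := by
      calc |c β| = ‖c β‖ := rfl
      _ ≤ ‖c‖*‖β‖ := c.le_opNorm β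
      _ ≤ ‖c‖*1 := mul_le_mul_of_nonneg_left hβn (norm_nonneg c)
      _ = ‖c‖ := mul_one _
    have hcα : |c αhat| ≤ ‖c‖ * θP := by
      calc |c αhat| = ‖c αhat‖ := rfl
      _ ≤ ‖c‖*‖αhat‖ := c.le_opNorm αhat
      _ ≤ ‖c‖*θP := mul_le_mul_of_nonneg_left hαhat (norm_nonneg c)
    have htle : t ≤ dε / D0 := by
      rw [htdef, div_le_div_iff₀ hden hD0]
      nlinarith [hdε0.le]
    have hval : c α' = (1-t) * c αhat + (t*θP) * c β := by
      rw [hα'def, map_add, _root_.map_smul, _root_.map_smul, smul_eq_mul, smul_eq_mul]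
    have hfac : θP * c β - c αhat ≤ 2*θP*‖c‖ := by
      have hb1 : θP * c β ≤ θP * ‖c‖ := mul_le_mul_of_nonneg_left (abs_le.mp hcβ).2 hθP.le
      have hb2 : -(‖c‖ * θP) ≤ c αhat := (abs_le.mp hcα).1
      linarith
    have h7 : t * (θP*(c β) - c αhat) ≤ (dε/D0) * (2*θP*‖c‖) := by
      rcases le_or_gt (θP*(c β) - c αhat) 0 with hle | hpos
      · have hL : t * (θP*(c β) - c αhat) ≤ 0 := mul_nonpos_of_nonneg_of_nonpos ht0.le hle
        have hR : 0 ≤ (dε/D0) * (2*θP*‖c‖) := by positivity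
        linarith
      · exact mul_le_mul htle hfac hpos.le (by positivity)
    have heq2 : (dε/D0) * (2*θP*‖c‖) = θD * dε := by rw [hθDdef]; ring
    have hcost : c α' ≤ c αhat + θD * dε := by
      have hsplit : c α' = c αhat + t * (θP*(c β) - c αhat) := by rw [hval]; ring
      have h8 := add_le_add_left h7 (c αhat)
      rw [heq2] at h8
      linarith
    have hinf := csInf_le hBdd hmemS1
    have hlast : θD * ε ≤ ε' := by
      have h1 : θD / (θD + 1) ≤ 1 := (div_le_one (by linarith)).mpr (by linarith)
      calc θD * ε = ε' * (θD/(θD+1)) := by rw [hεdef]; ring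
      _ ≤ ε' * 1 := mul_le_mul_of_nonneg_left h1 hε'.le
      _ = ε' := mul_one _
    have hsplit : θD * dε = θD * d + θD * ε := by rw [hdεdef]; ring
    linarith
  have claimB : θD * d ≤ sSup S2 := by
    rcases eq_or_lt_of_le hd0 with hEq | hdpos
    · rw [← hEq, mul_zero]
      exact le_csSup hS2bdd h0S2
    · set U : Set B := 𝕂 + Metric.ball (0:B) d with hUdef
      have hUopen : IsOpen U := IsOpen.add_left Metric.isOpen_ball
      have hUconv : Convex ℝ U := h𝕂_convex.add (convex_ball _ _)
      have hmemU : ∀ k ∈ 𝕂, ∀ w : B, ‖w‖ < d → k + w ∈ U := fun k hk w hw =>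
        Set.mem_add.mpr ⟨k, hk, w, Metric.mem_ball.mpr (by simpa [dist_zero_right] using hw), rfl⟩
      have hxU : x ∉ U := by
        intro hmem
        rw [Set.mem_add] at hmem
        obtain ⟨k, hk, w, hw, hsum⟩ := hmem
        have hwn : ‖w‖ < d := by simpa [dist_zero_right] using Metric.mem_ball.mp hw
        have hxkw : x - k = w := by rw [← hsum]; abel
        have hdist : dist x k < d := by rw [dist_eq_norm, hxkw]; exact hwn
        have := Metric.infDist_le_dist_of_mem (x := x) hk
        rw [← hddef] at this
        linarith
      obtain ⟨f, hf⟩ := geometric_hahn_banach_open_point hUconv hUopen hxU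
      have hfx0 : 0 < f x := by
        have := hf _ (hmemU 0 h0K 0 (by simpa using hdpos))
        simpa using this
      have hfK : ∀ k ∈ 𝕂, f k ≤ 0 := by
        intro k hk
        by_contra hpos
        push_neg at hpos
        set s : ℝ := (f x + 1)/(f k) with hsdef
        have hs : 0 ≤ s := by rw [hsdef]; exact le_of_lt (div_pos (by linarith) hpos)
        have h1 := hf _ (hmemU _ (h𝕂_cone k hk s hs) 0 (by simpa using hdpos))
        rw [add_zero, _root_.map_smul, smul_eq_mul, hsdef, div_mul_cancel₀ _ (ne_of_gt hpos)] at h1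
        linarith
      have hfb : ∀ w : B, ‖w‖ < d → f w < f x := by
        intro w hw
        have := hf _ (hmemU 0 h0K w hw)
        simpa using this
      have hfnorm : ‖f‖ ≤ f x / d := by
        refine ContinuousLinearMap.opNorm_le_bound _ (by positivity) (fun w => ?_)
        rcases eq_or_ne w 0 with rfl | hw0
        · simp
        · have hn : (0:ℝ) < ‖w‖ := norm_pos_iff.mpr hw0
          have key : ∀ r : ℝ, 0 ≤ r → r < 1 → r * (d * |f w|) ≤ f x * ‖w‖ := by
            intro r hr0 hr1
            set cc : ℝ := r * d / ‖w‖ with hccdef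
            have hcc0 : 0 ≤ cc := by rw [hccdef]; positivity
            have hwr : ‖cc • w‖ < d := by
              rw [norm_smul, Real.norm_eq_abs, abs_of_nonneg hcc0, hccdef,
                div_mul_cancel₀ _ hn.ne']
              nlinarith
            have h1 := hfb _ hwr
            have h2 := hfb _ (by rwa [norm_neg] : ‖-(cc • w)‖ < d)
            rw [_root_.map_smul, smul_eq_mul] at h1
            rw [map_neg, _root_.map_smul, smul_eq_mul] at h2
            have habs : cc * |f w| ≤ f x := by
              rcases abs_cases (f w) with ⟨he, _⟩ | ⟨he, _⟩ <;> rw [he] <;> nlinarith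
            have := mul_le_mul_of_nonneg_right habs hn.le
            have hL : cc * |f w| * ‖w‖ = r * (d * |f w|) := by
              rw [hccdef]; field_simp
            rw [hL] at this
            nlinarith [hfx0.le]
          have hfin : d * |f w| ≤ f x * ‖w‖ := by
            by_contra hlt
            push_neg at hlt
            have hB0 : 0 ≤ f x * ‖w‖ := by positivity
            have hA : 0 < d * |f w| := lt_of_le_of_lt hB0 hlt
            set r : ℝ := (f x * ‖w‖ + d * |f w|) / (2 * (d * |f w|)) with hrdef
            have hr0 : 0 ≤ r := by
              rw [hrdef]; exact le_of_lt (div_pos (by linarith) (by linarith))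
            have hr1 : r < 1 := by
              rw [hrdef, div_lt_one (by linarith)]; linarith
            have hk2 := key r hr0 hr1
            have hreq : r * (d * |f w|) = (f x * ‖w‖ + d * |f w|)/2 := by
              rw [hrdef, div_mul_eq_mul_div, div_eq_div_iff (mul_pos two_pos hA).ne' (by norm_num)]; ring
            rw [hreq] at hk2
            linarith
          rw [Real.norm_eq_abs, div_mul_eq_mul_div, le_div_iff₀ hdpos]
          nlinarith
      have hfne : ‖f‖ ≠ 0 := by
        intro h0'
        have h1 : f x ≤ ‖f‖ * ‖x‖ := by
          calc f x ≤ |f x| := le_abs_self _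
          _ ≤ ‖f‖ * ‖x‖ := f.le_opNorm x
        rw [h0', zero_mul] at h1
        linarith
      have hfpos : 0 < ‖f‖ := lt_of_le_of_ne (norm_nonneg f) (Ne.symm hfne)
      set y : B →L[ℝ] ℝ := (θD / ‖f‖) • (-f) with hydef
      have hyK : ∀ b' ∈ 𝕂, 0 ≤ y b' := by
        intro b' hb'
        rw [hydef]
        simp only [ContinuousLinearMap.smul_apply, ContinuousLinearMap.neg_apply, smul_eq_mul]
        exact mul_nonneg (by positivity) (by linarith [hfK b' hb'])
      have hyn : ‖y‖ ≤ θD := by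
        rw [hydef, norm_smul (θD / ‖f‖) (-f), norm_neg, Real.norm_eq_abs, abs_of_nonneg (by positivity),
          div_mul_cancel₀ _ hfne]
      have hyval : y (b - An αhat) = (θD/‖f‖) * f x := by
        rw [hydef]
        simp only [ContinuousLinearMap.smul_apply, ContinuousLinearMap.neg_apply, smul_eq_mul,
          hxdef, map_sub]
        ring
      have hge : θD * d ≤ y (b - An αhat) := by
        rw [hyval]
        have h2 := mul_le_mul_of_nonneg_left hfnorm hdpos.le
        have h2' : d * (f x / d) = f x := by field_simp
        have h1 : d * ‖f‖ ≤ f x := by linarith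
        have h3 : θD * d = (θD/‖f‖) * (d * ‖f‖) := by field_simp
        rw [h3]
        exact mul_le_mul_of_nonneg_left h1 (by positivity)
      exact le_trans hge (le_csSup hS2bdd ⟨y, ⟨hyK, hyn⟩, rfl⟩)
  linarith [claimA, claimB]
end

section
/- For every η > 0, ∫_C exp((g(k) − g_max)/η) dk ≥ min{(mη/L_g)^m, 1} · exp(−min{m, L_g/η}) (Lemma 5.7, lower bound for the integral of an exponentiated Lipschitz function over the unit hypercube). -/
open MeasureTheory

/-- **Lemma 5.7.**
For a function `g` on the unit hypercube `C = [0,1]^m` that is `L_g`-Lipschitz with respect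
to the ℓ∞ norm, with maximum `g_max`, and any `η > 0`:
`∫_C exp((g(k) − g_max)/η) dk ≥ min{(mη/L_g)^m, 1} · exp(−min{m, L_g/η})`. -/
theorem stmt_17
    (m : ℕ) (hm : 1 ≤ m)
    (g : (Fin m → ℝ) → ℝ) (Lg : ℝ) (hLg : 0 < Lg)
    (hg_lip : ∀ k ∈ Set.Icc (0 : Fin m → ℝ) 1, ∀ k' ∈ Set.Icc (0 : Fin m → ℝ) 1,
        |g k - g k'| ≤ Lg * dist k k')
    (gmax : ℝ) (hgmax : IsGreatest (g '' Set.Icc (0 : Fin m → ℝ) 1) gmax)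
    (η : ℝ) (hη : 0 < η) :
    min ((m * η / Lg) ^ m) 1 * Real.exp (-min (m : ℝ) (Lg / η)) ≤
      ∫ k in Set.Icc (0 : Fin m → ℝ) 1, Real.exp ((g k - gmax) / η) := by
  obtain ⟨⟨k₀, hk₀C, hk₀⟩, hub⟩ := hgmax
  have hmpos : (0:ℝ) < m := by exact_mod_cast hm
  set δ : ℝ := min (m * η / Lg) 1 with hδdef
  have hδpos : 0 < δ := lt_min (by positivity) one_pos
  have hδle1 : δ ≤ 1 := min_le_right _ _
  set a : Fin m → ℝ := fun i => min (k₀ i) (1 - δ) with ha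
  set b : Fin m → ℝ := fun i => a i + δ with hb
  have hab : a ≤ b := fun i => by simp [hb]; linarith
  have hS_sub : Set.Icc a b ⊆ Set.Icc (0 : Fin m → ℝ) 1 := by
    intro k hk
    constructor
    · intro i
      have h1 := hk.1 i
      have h2 := hk₀C.1 i
      simp only [ha] at h1
      simp only [Pi.zero_apply] at h2 ⊢
      rcases le_total (k₀ i) (1 - δ) with h | h
      · simp [min_eq_left h] at h1; linarith
      · simp [min_eq_right h] at h1; linarith
    · intro i
      have h1 := hk.2 i
      have h2 := hk₀C.2 i
      simp only [hb, ha, Pi.one_apply] at h1 ⊢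
      have : min (k₀ i) (1 - δ) ≤ 1 - δ := min_le_right _ _
      linarith
  have hk₀S : k₀ ∈ Set.Icc a b := by
    constructor
    · intro i; exact min_le_left _ _
    · intro i
      simp only [hb, ha]
      have h2 := hk₀C.2 i
      rcases le_total (k₀ i) (1 - δ) with h | h
      · simp [min_eq_left h]; linarith
      · simp [min_eq_right h]; simpa using h2
  -- continuity and integrability of the integrand
  have hgcont : ContinuousOn g (Set.Icc (0 : Fin m → ℝ) 1) := by
    have : LipschitzOnWith (Real.toNNReal Lg) g (Set.Icc (0 : Fin m → ℝ) 1) := by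
      rw [lipschitzOnWith_iff_dist_le_mul]
      intro x hx y hy
      have := hg_lip x hx y hy
      rw [Real.dist_eq]
      simpa [Real.coe_toNNReal _ hLg.le] using this
    exact this.continuousOn
  have hcont : ContinuousOn (fun k => Real.exp ((g k - gmax) / η))
      (Set.Icc (0 : Fin m → ℝ) 1) :=
    (Real.continuous_exp.comp_continuousOn ((hgcont.sub continuousOn_const).div_const η))
  have hint : IntegrableOn (fun k => Real.exp ((g k - gmax) / η))
      (Set.Icc (0 : Fin m → ℝ) 1) :=
    hcont.integrableOn_compact isCompact_Icc
  have hintS : IntegrableOn (fun k => Real.exp ((g k - gmax) / η)) (Set.Icc a b) :=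
    hint.mono_set hS_sub
  -- pointwise lower bound on the subcube
  have hlb : ∀ k ∈ Set.Icc a b, Real.exp (-(Lg * δ / η)) ≤ Real.exp ((g k - gmax) / η) := by
    intro k hk
    apply Real.exp_le_exp.2
    have hkC := hS_sub hk
    have hdist : dist k k₀ ≤ δ := by
      rw [dist_pi_le_iff hδpos.le]
      intro i
      rw [Real.dist_eq, abs_le]
      have h1 := hk.1 i; have h2 := hk.2 i
      have h3 := hk₀S.1 i; have h4 := hk₀S.2 i
      simp only [hb] at h2 h4
      constructor <;> linarith
    have hlip := hg_lip k hkC k₀ hk₀C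
    have : gmax - g k ≤ Lg * δ := by
      have h1 : g k₀ - g k ≤ |g k - g k₀| := by rw [abs_sub_comm]; exact le_abs_self _
      have h2 : Lg * dist k k₀ ≤ Lg * δ := by nlinarith
      rw [hk₀] at hlip h1
      linarith
    rw [← neg_div]
    gcongr
    linarith
  -- volume of the subcube
  have hvol : (volume (Set.Icc a b)).toReal = δ ^ m := by
    rw [Real.volume_Icc_pi_toReal hab]
    simp [hb]
  have h1 : Real.exp (-(Lg * δ / η)) * δ ^ m ≤
      ∫ k in Set.Icc a b, Real.exp ((g k - gmax) / η) := by
    have := MeasureTheory.setIntegral_ge_of_const_le (measurableSet_Icc)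
      (measure_Icc_lt_top).ne hlb hintS
    change (volume (Set.Icc a b)).toReal • Real.exp (-(Lg * δ / η)) ≤ _ at this
    rwa [hvol, smul_eq_mul, mul_comm] at this
  have h2 : (∫ k in Set.Icc a b, Real.exp ((g k - gmax) / η)) ≤
      ∫ k in Set.Icc (0 : Fin m → ℝ) 1, Real.exp ((g k - gmax) / η) := by
    apply setIntegral_mono_set hint
    · filter_upwards with k using (Real.exp_pos _).le
    · exact HasSubset.Subset.eventuallyLE hS_sub
  -- identify the constants
  have hδpow : δ ^ m = min ((m * η / Lg) ^ m) 1 := by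
    rcases le_total (m * η / Lg) 1 with h | h
    · rw [hδdef, min_eq_left h, min_eq_left (pow_le_one₀ (by positivity) h)]
    · rw [hδdef, min_eq_right h, min_eq_right (one_le_pow₀ h), one_pow]
  have hLδ : Lg * δ / η = min (m : ℝ) (Lg / η) := by
    rcases le_total (m * η / Lg) 1 with h | h
    · rw [hδdef, min_eq_left h]
      have hm2 : (m : ℝ) ≤ Lg / η := by
        rw [div_le_one (by positivity)] at h
        rw [le_div_iff₀ hη]; linarith
      rw [min_eq_left hm2]
      field_simp
    · rw [hδdef, min_eq_right h, mul_one]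
      have hm2 : Lg / η ≤ (m : ℝ) := by
        rw [le_div_iff₀ (by positivity)] at h
        rw [div_le_iff₀ hη]; linarith
      rw [min_eq_right hm2]
  calc min ((m * η / Lg) ^ m) 1 * Real.exp (-min (m : ℝ) (Lg / η))
      = Real.exp (-(Lg * δ / η)) * δ ^ m := by rw [hδpow, hLδ, mul_comm]
    _ ≤ _ := h1.trans h2
end

section
/- For every η > 0, the relative entropy of the Gibbs measure with respect to the uniform measure satisfies ∫ log(dy_η/dλ) dy_η ≤ m · max{ log( e·L_g / (m·η) ), 1 } (Lemma 5.8, entropy prox-bound: the prox-function evaluated at the entropy maximizer is bounded by C·max{log(c/η),1} with C = m and c = e·L_g/m). -/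
open MeasureTheory

/-- **Lemma 5.8 (entropy prox-bound).**
For the Gibbs measure `y_η` with density `exp(g/η)/∫exp(g/η)dλ` with respect to the uniform
measure `λ` on the unit hypercube `[0,1]^m`, where `g` is `L_g`-Lipschitz for the ℓ∞ norm,
the relative entropy satisfies
`∫ log(dy_η/dλ) dy_η ≤ m · max{ log(e·L_g/(m·η)), 1 }`. -/
theorem stmt_18
    (m : ℕ) (hm : 1 ≤ m)
    (g : (Fin m → ℝ) → ℝ) (Lg : ℝ) (hLg : 0 < Lg)
    (hg_lip : ∀ k ∈ Set.Icc (0 : Fin m → ℝ) 1, ∀ k' ∈ Set.Icc (0 : Fin m → ℝ) 1,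
        |g k - g k'| ≤ Lg * dist k k')
    (η : ℝ) (hη : 0 < η)
    -- the uniform (Lebesgue) probability measure on `[0,1]^m`
    (lam : Measure (Fin m → ℝ)) (hlam : lam = volume.restrict (Set.Icc 0 1))
    -- the Gibbs measure
    (yeta : Measure (Fin m → ℝ))
    (hyeta : yeta = lam.withDensity fun k =>
      ENNReal.ofReal (Real.exp (g k / η) / ∫ k', Real.exp (g k' / η) ∂lam)) :
    (∫ k, Real.log ((yeta.rnDeriv lam) k).toReal ∂yeta) ≤
      (m : ℝ) * max (Real.log (Real.exp 1 * Lg / (m * η))) 1 := by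
  have hm' : (1:ℝ) ≤ (m:ℝ) := by exact_mod_cast hm
  have hmpos : (0:ℝ) < (m:ℝ) := lt_of_lt_of_le one_pos hm'
  set C : Set (Fin m → ℝ) := Set.Icc 0 1 with hCdef
  have hCmeas : MeasurableSet C := measurableSet_Icc
  -- the clamp map onto the cube
  set proj : (Fin m → ℝ) → (Fin m → ℝ) := fun k i => max 0 (min 1 (k i)) with hprojdef
  have hprojC : ∀ k, proj k ∈ C := by
    intro k
    constructor
    · intro i; exact le_max_left _ _
    · intro i; exact max_le (by norm_num) (min_le_left _ _)
  have hproj_cont : Continuous proj := by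
    apply continuous_pi; intro i
    exact continuous_const.max (continuous_const.min (continuous_apply i))
  have hproj_id : ∀ k ∈ C, proj k = k := by
    intro k hk
    funext i
    have h0 : 0 ≤ k i := hk.1 i
    have h1 : k i ≤ 1 := hk.2 i
    simp [hprojdef, min_eq_right h1, max_eq_right h0]
  have hg_contOn : ContinuousOn g C := by
    refine LipschitzOnWith.continuousOn (K := Real.toNNReal Lg) ?_
    rw [lipschitzOnWith_iff_dist_le_mul]
    intro x hx y hy
    rw [Real.dist_eq]
    calc |g x - g y| ≤ Lg * dist x y := hg_lip x hx y hy
      _ ≤ _ := by rw [Real.coe_toNNReal _ hLg.le]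
  set G : (Fin m → ℝ) → ℝ := g ∘ proj with hGdef
  have hGC : ∀ k ∈ C, G k = g k := fun k hk => by
    simp only [hGdef, Function.comp_apply, hproj_id k hk]
  have hGcont : Continuous G := hg_contOn.comp_continuous hproj_cont hprojC
  obtain ⟨B, hB⟩ := (isCompact_Icc (a := (0 : Fin m → ℝ)) (b := 1)).exists_bound_of_continuousOn hg_contOn
  have hGB : ∀ k, ‖G k‖ ≤ B := fun k => hB (proj k) (hprojC k)
  -- lam is a probability measure
  haveI hlamprob : IsProbabilityMeasure lam := by
    rw [hlam]
    constructor
    rw [Measure.restrict_apply MeasurableSet.univ, Set.univ_inter, Real.volume_Icc_pi]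
    simp
  -- the partition function
  set Z : ℝ := ∫ k, Real.exp (G k / η) ∂lam with hZdef
  have hae : ∀ᵐ k ∂lam, g k = G k := by
    rw [hlam]
    filter_upwards [ae_restrict_mem hCmeas] with k hk
    exact (hGC k hk).symm
  have hZg : (∫ k, Real.exp (g k / η) ∂lam) = Z := by
    refine integral_congr_ae ?_
    filter_upwards [hae] with k hk
    rw [hk]
  set ρ : (Fin m → ℝ) → ENNReal := fun k => ENNReal.ofReal (Real.exp (G k / η) / Z) with hρdef
  have hyeta' : yeta = lam.withDensity ρ := by
    rw [hyeta, hZg]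
    refine withDensity_congr_ae ?_
    filter_upwards [hae] with k hk
    rw [hk]
  have hρmeas : Measurable ρ := by
    have : Continuous fun k => Real.exp (G k / η) / Z :=
      (Real.continuous_exp.comp (hGcont.div_const η)).div_const Z
    exact ENNReal.measurable_ofReal.comp this.measurable
  have hexp_cont : Continuous fun k => Real.exp (G k / η) :=
    Real.continuous_exp.comp (hGcont.div_const η)
  have hexp_int : Integrable (fun k => Real.exp (G k / η)) lam := by
    refine (integrable_const (Real.exp (B / η))).mono' hexp_cont.aestronglyMeasurable ?_
    refine Filter.Eventually.of_forall fun k => ?_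
    rw [Real.norm_eq_abs, abs_of_pos (Real.exp_pos _)]
    exact Real.exp_le_exp.mpr ((div_le_div_iff_of_pos_right hη).mpr ((le_abs_self _).trans (hGB k)))
  -- max point
  have hCne : C.Nonempty := ⟨0, le_refl _, fun i => by norm_num⟩
  obtain ⟨xs, hxsC, hxs⟩ := (isCompact_Icc (a := (0 : Fin m → ℝ)) (b := 1)).exists_isMaxOn hCne hg_contOn
  have hxs0 : ∀ i, (0:ℝ) ≤ xs i := fun i => hxsC.1 i
  have hxs1 : ∀ i, xs i ≤ 1 := fun i => hxsC.2 i
  have hGle : ∀ k, G k ≤ g xs := fun k => hxs (hprojC k)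
  -- the small cube
  set δ : ℝ := min ((m : ℝ) * η / Lg) 1 with hδdef
  have hδ0 : 0 < δ := lt_min (by positivity) one_pos
  have hδ1 : δ ≤ 1 := min_le_right _ _
  set a : Fin m → ℝ := fun i => min (xs i) (1 - δ) with hadef
  set Q : Set (Fin m → ℝ) := Set.Icc a (fun i => a i + δ) with hQdef
  have hQC : Q ⊆ C := by
    intro k hk
    have hk1 : ∀ i, a i ≤ k i := fun i => hk.1 i
    have hk2 : ∀ i, k i ≤ a i + δ := fun i => hk.2 i
    refine ⟨fun i => ?_, fun i => ?_⟩
    · show (0:ℝ) ≤ k i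
      have h1 : (0:ℝ) ≤ a i := le_min (hxs0 i) (by linarith)
      linarith [hk1 i]
    · show k i ≤ (1:ℝ)
      have h1 : a i ≤ 1 - δ := min_le_right _ _
      linarith [hk2 i]
  have hQdist : ∀ k ∈ Q, dist k xs ≤ δ := by
    intro k hk
    rw [dist_pi_le_iff hδ0.le]
    intro i
    rw [Real.dist_eq, abs_le]
    have h1 : a i ≤ k i := hk.1 i
    have h2 : k i ≤ a i + δ := hk.2 i
    have h3 : a i ≤ xs i := min_le_left _ _
    have h4 : xs i - δ ≤ a i := le_min (by linarith) (by linarith [hxs1 i])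
    constructor <;> linarith
  have hQlb : ∀ k ∈ Q, g xs - Lg * δ ≤ g k := by
    intro k hk
    have h := hg_lip xs hxsC k (hQC hk)
    have hd : dist xs k ≤ δ := by rw [dist_comm]; exact hQdist k hk
    have : g xs - g k ≤ Lg * δ := by
      calc g xs - g k ≤ |g xs - g k| := le_abs_self _
        _ ≤ Lg * dist xs k := h
        _ ≤ Lg * δ := mul_le_mul_of_nonneg_left hd hLg.le
    linarith
  have hQmeas : MeasurableSet Q := measurableSet_Icc
  have hlamQ : lam Q = ENNReal.ofReal δ ^ m := by
    rw [hlam, Measure.restrict_apply hQmeas, Set.inter_eq_self_of_subset_left hQC,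
      Real.volume_Icc_pi]
    simp
  have hlamQ' : (lam Q).toReal = δ ^ m := by
    rw [hlamQ, ENNReal.toReal_pow, ENNReal.toReal_ofReal hδ0.le]
  -- lower bound on Z
  have hZlb : δ ^ m * Real.exp ((g xs - Lg * δ) / η) ≤ Z := by
    have h1 : Real.exp ((g xs - Lg * δ) / η) * (lam Q).toReal ≤
        ∫ k in Q, Real.exp (G k / η) ∂lam := by
      refine setIntegral_ge_of_const_le_real hQmeas (measure_ne_top _ _) ?_ hexp_int.integrableOn
      intro k hk
      refine Real.exp_le_exp.mpr ((div_le_div_iff_of_pos_right hη).mpr ?_)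
      rw [hGC k (hQC hk)]
      exact hQlb k hk
    have h2 : ∫ k in Q, Real.exp (G k / η) ∂lam ≤ Z := by
      refine setIntegral_le_integral hexp_int ?_
      exact Filter.Eventually.of_forall fun k => (Real.exp_pos _).le
    calc δ ^ m * Real.exp ((g xs - Lg * δ) / η)
        = Real.exp ((g xs - Lg * δ) / η) * (lam Q).toReal := by rw [hlamQ']; ring
      _ ≤ _ := h1.trans h2
  have hZpos : 0 < Z := lt_of_lt_of_le (by positivity) hZlb
  -- yeta is a probability measure
  haveI hyetaprob : IsProbabilityMeasure yeta := by
    constructor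
    rw [hyeta', withDensity_apply _ MeasurableSet.univ, Measure.restrict_univ]
    have hint : Integrable (fun k => Real.exp (G k / η) / Z) lam := hexp_int.div_const Z
    rw [hρdef, ← ofReal_integral_eq_lintegral_ofReal hint
      (Filter.Eventually.of_forall fun k => by positivity)]
    rw [integral_div, ← hZdef, div_self hZpos.ne']
    simp
  -- rnDeriv identification
  have hac : yeta ≪ lam := hyeta' ▸ withDensity_absolutelyContinuous lam ρ
  have hrn : yeta.rnDeriv lam =ᵐ[lam] ρ := hyeta' ▸ Measure.rnDeriv_withDensity lam hρmeas
  have hrn_yeta : ∀ᵐ k ∂yeta, (yeta.rnDeriv lam k).toReal = Real.exp (G k / η) / Z :=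
    hac.ae_le (by
      filter_upwards [hrn] with k hk
      rw [hk, hρdef, ENNReal.toReal_ofReal (by positivity)])
  -- rewrite the integral
  have hGint : Integrable G yeta := by
    refine (integrable_const B).mono' hGcont.aestronglyMeasurable ?_
    exact Filter.Eventually.of_forall hGB
  have hstep : (∫ k, Real.log ((yeta.rnDeriv lam) k).toReal ∂yeta) =
      (∫ k, G k ∂yeta) / η - Real.log Z := by
    have h1 : (∫ k, Real.log ((yeta.rnDeriv lam) k).toReal ∂yeta) =
        ∫ k, (G k / η - Real.log Z) ∂yeta := by
      refine integral_congr_ae ?_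
      filter_upwards [hrn_yeta] with k hk
      rw [hk, Real.log_div (Real.exp_ne_zero _) hZpos.ne', Real.log_exp]
    rw [h1, integral_sub (hGint.div_const η) (integrable_const _), integral_div,
      integral_const, probReal_univ, one_smul]
  have hGxs : (∫ k, G k ∂yeta) ≤ g xs := by
    calc (∫ k, G k ∂yeta) ≤ ∫ _, g xs ∂yeta :=
        integral_mono hGint (integrable_const _) hGle
      _ = g xs := by rw [integral_const, probReal_univ, one_smul]
  have hlogZ : (m : ℝ) * Real.log δ + (g xs - Lg * δ) / η ≤ Real.log Z := by
    calc (m : ℝ) * Real.log δ + (g xs - Lg * δ) / η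
        = Real.log (δ ^ m * Real.exp ((g xs - Lg * δ) / η)) := by
          rw [Real.log_mul (by positivity) (Real.exp_ne_zero _), Real.log_pow, Real.log_exp]
      _ ≤ Real.log Z := Real.log_le_log (by positivity) hZlb
  have hmain : (∫ k, Real.log ((yeta.rnDeriv lam) k).toReal ∂yeta) ≤
      Lg * δ / η - (m : ℝ) * Real.log δ := by
    rw [hstep]
    have h0 := (div_le_div_iff_of_pos_right hη).mpr hGxs
    have h2 : (g xs - Lg * δ) / η = g xs / η - Lg * δ / η := by ring
    linarith [hlogZ]
  refine hmain.trans ?_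
  -- final arithmetic
  rcases le_total ((m : ℝ) * η / Lg) 1 with h | h
  · have hδeq : δ = (m : ℝ) * η / Lg := min_eq_left h
    have hmη : (m : ℝ) * η ≤ Lg := by
      rw [div_le_one hLg] at h; exact h
    have h1 : Lg * δ / η = (m : ℝ) := by
      rw [hδeq]; field_simp
    have h2 : Real.log δ = - Real.log (Lg / ((m : ℝ) * η)) := by
      rw [hδeq, ← Real.log_inv, inv_div]
    have h3 : Real.log (Real.exp 1 * Lg / ((m : ℝ) * η)) = 1 + Real.log (Lg / ((m : ℝ) * η)) := by
      rw [mul_div_assoc, Real.log_mul (Real.exp_ne_zero _) (by positivity), Real.log_exp]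
    have h4 : (0:ℝ) ≤ Real.log (Lg / ((m : ℝ) * η)) := by
      refine Real.log_nonneg ?_
      rw [le_div_iff₀ (by positivity)]
      linarith
    have h5 : max (Real.log (Real.exp 1 * Lg / ((m:ℝ) * η))) 1 =
        Real.log (Real.exp 1 * Lg / ((m:ℝ) * η)) := max_eq_left (by rw [h3]; linarith)
    rw [h5, h3, h1, h2]
    ring_nf
    nlinarith [h4, hm']
  · have hδeq : δ = 1 := min_eq_right h
    have hLgη : Lg ≤ (m : ℝ) * η := by
      rw [le_div_iff₀ hLg] at h; linarith
    rw [hδeq, Real.log_one, mul_zero, sub_zero, mul_one]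
    have h1 : Lg / η ≤ (m : ℝ) := by
      rw [div_le_iff₀ hη]; linarith
    have h2 : (1:ℝ) ≤ max (Real.log (Real.exp 1 * Lg / ((m:ℝ) * η))) 1 := le_max_right _ _
    calc Lg / η ≤ (m : ℝ) := h1
      _ = (m : ℝ) * 1 := by ring
      _ ≤ _ := mul_le_mul_of_nonneg_left h2 hmpos.le
end
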